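/- arXiv:math/0410066 — 5 statements merged into one kernel-verified Lean document; each statement's English description precedes it below -/
import Mathlib

section
/- There exist constants R₁, R₂ > 0 depending only on the matrix P with the following property: for any two inputs x₁, x₂ : [0,∞) → ℝ^J, each right-continuous with left limits and with x_i(0) ≥ 0 componentwise, and any solutions (y₁, q₁) and (y₂, q₂) of the Skorohod problem with reflection matrix I − Pᵀ and inputs x₁ and x₂ respectively, one has for every t ≥ 0: sup_{0 ≤ τ ≤ t} ‖q₁(τ) − q₂(τ)‖ ≤ R₁ · sup_{0 ≤ τ ≤ t} ‖x₁(τ) − x₂(τ)‖ and sup_{0 ≤ τ ≤ t} ‖y₁(τ) − y₂(τ)‖ ≤ R₂ · sup_{0 ≤ τ ≤ t} ‖x₁(τ) − x₂(τ)‖. -/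
open MeasureTheory Filter Topology

noncomputable section

/-- The `L¹` norm on `ℝ^J`: `‖z‖ = ∑_j |z_j|`. -/
def l1Norm {J : ℕ} (v : Fin J → ℝ) : ℝ := ∑ j, |v j|

/-- The matrix `P` is substochastic (nonnegative entries, row sums at most 1)
and has spectral radius strictly less than one. -/
def IsSubstochasticSpecLtOne {J : ℕ} (P : Matrix (Fin J) (Fin J) ℝ) : Prop :=
  (∀ i j, 0 ≤ P i j) ∧ (∀ i, ∑ j, P i j ≤ 1) ∧
    (∀ μ ∈ spectrum ℂ (P.map (algebraMap ℝ ℂ)), ‖μ‖ < 1)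

/-- `f` is right-continuous with left limits on `[0, ∞)`. -/
def RCLL {J : ℕ} (f : ℝ → Fin J → ℝ) : Prop :=
  (∀ t : ℝ, 0 ≤ t → ContinuousWithinAt f (Set.Ici t) t) ∧
    (∀ t : ℝ, 0 < t → ∃ L : Fin J → ℝ, Tendsto f (nhdsWithin t (Set.Iio t)) (nhds L))

/-- `(y, q)` is a solution of the Skorohod problem on `[0, ∞)` with input `x` and
reflection matrix `I - Pᵀ`. -/
def IsSkorohodSolution {J : ℕ} (P : Matrix (Fin J) (Fin J) ℝ)
    (x y q : ℝ → Fin J → ℝ) : Prop :=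
  (∀ t : ℝ, 0 ≤ t → q t = x t + (1 - P.transpose).mulVec (y t)) ∧
  (∀ t : ℝ, 0 ≤ t → ∀ j, 0 ≤ q t j) ∧
  y 0 = 0 ∧
  (∀ j, MonotoneOn (fun s => y s j) (Set.Ici (0 : ℝ))) ∧
  (∀ j, ∀ t : ℝ, 0 ≤ t → ContinuousWithinAt (fun s => y s j) (Set.Ici t) t) ∧
  (∀ j, ∃ F : StieltjesFunction ℝ,
    (∀ s : ℝ, F s = y (max s 0) j) ∧
    ∀ t : ℝ, 0 ≤ t → ∫ s in Set.Icc (0 : ℝ) t, q s j ∂F.measure = 0)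

/-!
Componentwise, the regulator of a Skorohod solution is minimal: `y_j(τ) ≤ b` for every `b ≥ 0`
dominating `(Pᵀ y)_j - x_j` on `[0, τ]`, because `dy_j` does not charge `{q_j > 0}`, which contains
`{y_j > b}`. Comparing two solutions this way, `m_k = sup_{[0,t]} |y₁_k - y₂_k|` satisfies
`m ≤ Pᵀ m + D` with `D = sup_{[0,t]} ‖x₁ - x₂‖`. By Gelfand's formula some power `Pⁿ` has row sums
at most `c < 1`; testing the inequality against the row-sum vectors `Pᴺ 1 ∈ [0, 1]` for `N < n`
gives `∑ m ≤ n J D / (1 - c)`. The bound on `q = x + (I - Pᵀ) y` follows since `Pᵀ` is an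
`ℓ¹` contraction.
-/

open Set Bornology Matrix

theorem isBounded_image_Icc_of_continuousWithinAt_Ici {E : Type*} [PseudoMetricSpace E]
    {f : ℝ → E} {a b : ℝ} (hr : ∀ t ∈ Icc a b, ContinuousWithinAt f (Ici t) t)
    (hl : ∀ t ∈ Ioc a b, ∃ L, Tendsto f (𝓝[<] t) (𝓝 L)) :
    IsBounded (f '' Icc a b) := by
  have bounded_near {l : Filter ℝ} {L : E} (hL : Tendsto f l (𝓝 L)) :
      ∃ u ∈ l, IsBounded (f '' u) :=
    ⟨_, hL (Metric.ball_mem_nhds L one_pos),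
      Metric.isBounded_ball.subset (image_preimage_subset _ _)⟩
  refine isCompact_Icc.induction_on (p := fun s => IsBounded (f '' s)) (by simp)
    (fun s t hst ht => ht.subset (image_mono hst))
    (fun s t hs ht => by simpa only [image_union] using hs.union ht) fun t ht => ?_
  obtain ⟨u, hu, hbu⟩ := bounded_near (hr t ht)
  rcases ht.1.eq_or_lt with rfl | hat
  · exact ⟨u, nhdsWithin_mono _ Icc_subset_Ici_self hu, hbu⟩
  · obtain ⟨L, hL⟩ := hl t ⟨hat, ht.2⟩
    obtain ⟨v, hv, hbv⟩ := bounded_near hL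
    refine ⟨v ∪ u, nhdsWithin_le_nhds ?_, by simpa only [image_union] using hbv.union hbu⟩
    rw [← nhdsLT_sup_nhdsGE]
    exact union_mem_sup hv hu

theorem measurable_of_continuousWithinAt_Ici {E : Type*} [TopologicalSpace E]
    [TopologicalSpace.PseudoMetrizableSpace E] [MeasurableSpace E] [BorelSpace E] {f : ℝ → E}
    (hf : ∀ t, ContinuousWithinAt f (Ici t) t) : Measurable f := by
  set u : ℕ → ℝ → ℝ := fun n s => ⌈s * (n + 1)⌉ / (n + 1)
  have hu_meas (n : ℕ) : Measurable (f ∘ u n) :=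
    (measurable_from_top (f := fun z : ℤ => f (z / (n + 1)))).comp
      (Int.measurable_ceil.comp (measurable_id.mul_const _))
  refine measurable_of_tendsto_metrizable hu_meas
    (tendsto_pi_nhds.2 fun s => (hf s).tendsto.comp ?_)
  have hpos (n : ℕ) : (0 : ℝ) < n + 1 := n.cast_add_one_pos
  have hle (n : ℕ) : s ≤ u n s := by
    rw [le_div_iff₀ (hpos n)]; exact Int.le_ceil _
  have hge (n : ℕ) : u n s ≤ s + 1 / (n + 1) := by
    rw [div_le_iff₀ (hpos n), add_mul, one_div_mul_cancel (hpos n).ne']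
    exact (Int.ceil_lt_add_one _).le
  refine tendsto_nhdsWithin_iff.2 ⟨tendsto_of_tendsto_of_tendsto_of_le_of_le tendsto_const_nhds ?_
    hle hge, Eventually.of_forall hle⟩
  simpa using (tendsto_const_nhds (x := s)).add (tendsto_one_div_add_atTop_nhds_zero_nat (𝕜 := ℝ))

theorem continuousWithinAt_Ici_comp_max {E : Type*} [TopologicalSpace E] {f : ℝ → E} {a : ℝ}
    (hf : ∀ t, a ≤ t → ContinuousWithinAt f (Ici t) t) (t : ℝ) :
    ContinuousWithinAt (fun s => f (max s a)) (Ici t) t :=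
  (hf _ (le_max_right t a)).comp (f := fun s => max s a)
    (continuous_id.max continuous_const : Continuous fun s : ℝ => max s a).continuousWithinAt
    fun _ hs => max_le_max_right a hs

theorem StieltjesFunction.le_of_measure_inter_eq_zero (F : StieltjesFunction ℝ) {a τ b : ℝ}
    (haτ : a ≤ τ) (ha : F a ≤ b) (hnull : F.measure ({s | b < F s} ∩ Icc a τ) = 0) :
    F τ ≤ b := by
  by_contra! hτ
  set A := {s | b < F s} ∩ Icc a τ
  have hτA : τ ∈ A := ⟨hτ, haτ, le_rfl⟩
  have hbdd : BddBelow A := ⟨a, fun s hs => hs.2.1⟩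
  set s₁ := sInf A
  have hs₁ : s₁ ∈ Icc a τ := ⟨le_csInf ⟨τ, hτA⟩ fun s hs => hs.2.1, csInf_le hbdd hτA⟩
  have hIoc : Ioc s₁ τ ⊆ A := fun s hs => by
    obtain ⟨r, hrA, hrs⟩ := exists_lt_of_csInf_lt ⟨τ, hτA⟩ hs.1
    exact ⟨hrA.1.trans_le (F.mono hrs.le), hs₁.1.trans hs.1.le, hs.2⟩
  -- either `F` charges `(s₁, τ]`, or it jumps over `b` at `s₁`
  rcases le_or_gt (F s₁) b with hFs₁ | hFs₁
  · have := measure_mono_null hIoc hnull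
    rw [F.measure_Ioc, ENNReal.ofReal_eq_zero] at this
    linarith
  · have hjump := measure_mono_null (singleton_subset_iff.2 ⟨hFs₁, hs₁⟩ : {s₁} ⊆ A) hnull
    rw [F.measure_singleton, ENNReal.ofReal_eq_zero] at hjump
    have has₁ : a < s₁ := hs₁.1.lt_of_ne fun h => by rw [← h] at hFs₁; linarith
    have hleft : Function.leftLim F s₁ ≤ b := by
      refine le_of_tendsto (F.mono.tendsto_leftLim s₁) ?_
      filter_upwards [Ioo_mem_nhdsLT has₁] with s hs
      by_contra! hbs
      exact (csInf_le hbdd ⟨hbs, hs.1.le, hs.2.le.trans hs₁.2⟩).not_gt hs.2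
    linarith

theorem spectralRadius_lt_one_of_forall_norm_lt_one {A : Type*} [NormedRing A] [NormedAlgebra ℂ A]
    [CompleteSpace A] {a : A} (h : ∀ z ∈ spectrum ℂ a, ‖z‖ < 1) : spectralRadius ℂ a < 1 := by
  rcases (spectrum ℂ a).eq_empty_or_nonempty with hempty | hne
  · simp [spectralRadius, hempty]
  · exact_mod_cast spectrum.spectralRadius_lt_of_forall_lt_of_nonempty hne (r := 1)
      fun z hz => by exact_mod_cast h z hz

theorem eventually_norm_pow_lt_one_of_spectralRadius_lt_one {A : Type*} [NormedRing A]
    [NormedAlgebra ℂ A] [CompleteSpace A] {a : A} (h : spectralRadius ℂ a < 1) :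
    ∀ᶠ n in atTop, ‖a ^ n‖ < 1 := by
  filter_upwards
    [(spectrum.pow_norm_pow_one_div_tendsto_nhds_spectralRadius a).eventually_lt_const h] with n hn
  rw [ENNReal.ofReal_lt_one] at hn
  by_contra! h1
  exact hn.not_ge (Real.one_le_rpow h1 (by positivity))

namespace Matrix

variable {ι : Type*} [Fintype ι]

section LinftyOpNorm

attribute [local instance] Matrix.linftyOpSeminormedAddCommGroup Matrix.linftyOpNormedRing
  Matrix.linftyOpNormedAlgebra

theorem sum_norm_le_linfty_opNorm {α : Type*} [SeminormedAddCommGroup α] (A : Matrix ι ι α)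
    (i : ι) : ∑ j, ‖A i j‖ ≤ ‖A‖ := by
  rw [linfty_opNorm_def]
  simpa using NNReal.coe_le_coe.2 (Finset.le_sup (f := fun i => ∑ j, ‖A i j‖₊) (Finset.mem_univ i))

theorem exists_pow_mulVec_one_le [DecidableEq ι] {P : Matrix ι ι ℝ}
    (h : ∀ μ ∈ spectrum ℂ (P.map (algebraMap ℝ ℂ)), ‖μ‖ < 1) :
    ∃ n : ℕ, ∃ c < 1, ∀ i, (P ^ n *ᵥ 1) i ≤ c := by
  obtain ⟨n, hn⟩ := (eventually_norm_pow_lt_one_of_spectralRadius_lt_one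
    (spectralRadius_lt_one_of_forall_norm_lt_one h)).exists
  refine ⟨n, _, hn, fun i => ?_⟩
  rw [← Matrix.map_pow]
  calc (P ^ n *ᵥ 1) i = ∑ j, (P ^ n) i j := by simp [mulVec, dotProduct]
    _ ≤ ∑ j, ‖(P ^ n).map (algebraMap ℝ ℂ) i j‖ :=
      Finset.sum_le_sum fun j _ => by simpa using le_abs_self _
    _ ≤ _ := sum_norm_le_linfty_opNorm _ i

end LinftyOpNorm

variable {P : Matrix ι ι ℝ}

theorem mulVec_mono_of_nonneg (hP0 : ∀ i j, 0 ≤ P i j) {v w : ι → ℝ} (h : v ≤ w) :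
    P *ᵥ v ≤ P *ᵥ w :=
  fun i => dotProduct_le_dotProduct_of_nonneg_left h (hP0 i)

theorem pow_mulVec_one_mem_Icc [DecidableEq ι] (hP0 : ∀ i j, 0 ≤ P i j)
    (hP1 : ∀ i, ∑ j, P i j ≤ 1) (N : ℕ) :
    P ^ N *ᵥ 1 ∈ Icc 0 1 := by
  induction N with
  | zero => simp
  | succ N ih =>
    rw [pow_succ', ← mulVec_mulVec]
    refine ⟨?_, (mulVec_mono_of_nonneg hP0 ih.2).trans fun i => ?_⟩
    · simpa using mulVec_mono_of_nonneg hP0 ih.1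
    · simpa [mulVec, dotProduct] using hP1 i

theorem sum_le_of_le_transpose_mulVec_add [DecidableEq ι] (hP0 : ∀ i j, 0 ≤ P i j)
    (hP1 : ∀ i, ∑ j, P i j ≤ 1) {n : ℕ} {c : ℝ} (hc : c < 1) (hn : ∀ i, (P ^ n *ᵥ 1) i ≤ c)
    {m δ : ι → ℝ} (hm0 : 0 ≤ m) (hδ : 0 ≤ δ) (hm : m ≤ Pᵀ *ᵥ m + δ) :
    ∑ i, m i ≤ n / (1 - c) * ∑ i, δ i := by
  have step (N : ℕ) : (P ^ N *ᵥ 1) ⬝ᵥ m ≤ (P ^ (N + 1) *ᵥ 1) ⬝ᵥ m + ∑ i, δ i := by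
    obtain ⟨h0, h1⟩ := pow_mulVec_one_mem_Icc hP0 hP1 N
    calc (P ^ N *ᵥ 1) ⬝ᵥ m ≤ (P ^ N *ᵥ 1) ⬝ᵥ (Pᵀ *ᵥ m + δ) :=
          dotProduct_le_dotProduct_of_nonneg_left hm h0
      _ = (P ^ (N + 1) *ᵥ 1) ⬝ᵥ m + (P ^ N *ᵥ 1) ⬝ᵥ δ := by
          rw [dotProduct_add, dotProduct_mulVec, vecMul_transpose, mulVec_mulVec, ← pow_succ']
      _ ≤ (P ^ (N + 1) *ᵥ 1) ⬝ᵥ m + 1 ⬝ᵥ δ := by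
          gcongr; exact dotProduct_le_dotProduct_of_nonneg_right h1 hδ
      _ = _ := by rw [one_dotProduct]
  have iterate (N : ℕ) : ∑ i, m i ≤ (P ^ N *ᵥ 1) ⬝ᵥ m + N * ∑ i, δ i := by
    induction N with
    | zero => simp [one_dotProduct]
    | succ N ih => push_cast; linarith [step N]
  have contract : (P ^ n *ᵥ 1) ⬝ᵥ m ≤ c * ∑ i, m i := by
    calc (P ^ n *ᵥ 1) ⬝ᵥ m ≤ (fun _ => c) ⬝ᵥ m := dotProduct_le_dotProduct_of_nonneg_right hn hm0
      _ = c * ∑ i, m i := by simp [dotProduct, Finset.mul_sum]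
  rw [div_mul_eq_mul_div, le_div_iff₀ (sub_pos.2 hc)]
  linarith [iterate n]

end Matrix

theorem continuous_l1Norm {J : ℕ} : Continuous (l1Norm (J := J)) := by
  unfold l1Norm; fun_prop

theorem l1Norm_nonneg {J : ℕ} (v : Fin J → ℝ) : 0 ≤ l1Norm v :=
  Finset.sum_nonneg fun _ _ => abs_nonneg _

theorem abs_apply_le_l1Norm {J : ℕ} (v : Fin J → ℝ) (j : Fin J) : |v j| ≤ l1Norm v :=
  Finset.single_le_sum (f := fun k => |v k|) (fun _ _ => abs_nonneg _) (Finset.mem_univ j)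

theorem l1Norm_add_le {J : ℕ} (u v : Fin J → ℝ) : l1Norm (u + v) ≤ l1Norm u + l1Norm v := by
  unfold l1Norm
  rw [← Finset.sum_add_distrib]
  exact Finset.sum_le_sum fun k _ => abs_add_le (u k) (v k)

theorem l1Norm_sub_le {J : ℕ} (u v : Fin J → ℝ) : l1Norm (u - v) ≤ l1Norm u + l1Norm v := by
  simpa [sub_eq_add_neg, l1Norm] using l1Norm_add_le u (-v)

theorem l1Norm_transpose_mulVec_le {J : ℕ} {P : Matrix (Fin J) (Fin J) ℝ}
    (hP0 : ∀ i j, 0 ≤ P i j) (hP1 : ∀ i, ∑ j, P i j ≤ 1) (v : Fin J → ℝ) :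
    l1Norm (Pᵀ *ᵥ v) ≤ l1Norm v := by
  calc l1Norm (Pᵀ *ᵥ v) ≤ ∑ j, ∑ k, P k j * |v k| := Finset.sum_le_sum fun j _ => by
        simpa [mulVec, dotProduct, abs_mul, abs_of_nonneg (hP0 _ j)] using
          Finset.abs_sum_le_sum_abs (fun k => P k j * v k) Finset.univ
    _ = ∑ k, (∑ j, P k j) * |v k| := by rw [Finset.sum_comm]; simp [Finset.sum_mul]
    _ ≤ ∑ k, 1 * |v k| := by gcongr; exact hP1 _
    _ = l1Norm v := by simp [l1Norm]

namespace RCLL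

variable {J : ℕ} {f g : ℝ → Fin J → ℝ}

theorem isBounded_image_Icc (hf : RCLL f) (T : ℝ) : IsBounded (f '' Icc 0 T) :=
  isBounded_image_Icc_of_continuousWithinAt_Ici (fun t ht => hf.1 t ht.1) fun t ht => hf.2 t ht.1

theorem measurable_comp_max (hf : RCLL f) : Measurable fun s => f (max s 0) :=
  measurable_of_continuousWithinAt_Ici (continuousWithinAt_Ici_comp_max hf.1)

theorem bddAbove_l1Norm_sub (hf : RCLL f) (hg : RCLL g) (T : ℝ) :
    BddAbove ((fun s => l1Norm (f s - g s)) '' Icc 0 T) := by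
  refine (isBounded_image_Icc_of_continuousWithinAt_Ici (fun t ht => ?_) fun t ht => ?_).bddAbove
  · exact continuous_l1Norm.continuousAt.comp_continuousWithinAt ((hf.1 t ht.1).sub (hg.1 t ht.1))
  · obtain ⟨L, hL⟩ := hf.2 t ht.1
    obtain ⟨M, hM⟩ := hg.2 t ht.1
    exact ⟨_, (continuous_l1Norm.tendsto _).comp (hL.sub hM)⟩

end RCLL

namespace IsSkorohodSolution

variable {J : ℕ} {P : Matrix (Fin J) (Fin J) ℝ} {x y q : ℝ → Fin J → ℝ}

theorem q_apply (h : IsSkorohodSolution P x y q) {s : ℝ} (hs : 0 ≤ s) (j : Fin J) :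
    q s j = x s j + y s j - ∑ k, P k j * y s k := by
  simp [h.1 s hs, sub_mulVec, mulVec, dotProduct, add_sub_assoc]

theorem q_nonneg (h : IsSkorohodSolution P x y q) {s : ℝ} (hs : 0 ≤ s) (j : Fin J) :
    0 ≤ q s j :=
  h.2.1 s hs j

theorem y_mono (h : IsSkorohodSolution P x y q) (j : Fin J) {s τ : ℝ} (hs : 0 ≤ s)
    (hsτ : s ≤ τ) : y s j ≤ y τ j :=
  h.2.2.2.1 j hs (hs.trans hsτ) hsτ

theorem y_nonneg (h : IsSkorohodSolution P x y q) {s : ℝ} (hs : 0 ≤ s) (j : Fin J) :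
    0 ≤ y s j := by
  simpa [h.2.2.1] using h.y_mono j le_rfl hs

theorem integrableOn_q (hP0 : ∀ i j, 0 ≤ P i j) (hx : RCLL x) (h : IsSkorohodSolution P x y q)
    (μ : Measure ℝ) [IsLocallyFiniteMeasure μ] (j : Fin J) (τ : ℝ) :
    IntegrableOn (fun s => q s j) (Icc 0 τ) μ := by
  obtain ⟨C, hC⟩ := isBounded_iff_forall_norm_le.1 (hx.isBounded_image_Icc τ)
  have hy_meas (k : Fin J) : Measurable fun s => y (max s 0) k :=
    Monotone.measurable fun a b hab =>
      h.y_mono k (le_max_right a 0) (max_le_max_right 0 hab)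
  have hmeas : Measurable fun s => x (max s 0) j + y (max s 0) j - ∑ k, P k j * y (max s 0) k :=
    (((measurable_pi_apply j).comp hx.measurable_comp_max).add (hy_meas j)).sub
      (Finset.measurable_sum _ fun k _ => (hy_meas k).const_mul _)
  refine IntegrableOn.of_bound measure_Icc_lt_top (hmeas.aestronglyMeasurable.congr ?_)
    (C + y τ j) ?_
  · refine ae_restrict_of_forall_mem measurableSet_Icc fun s hs => ?_
    simp only [max_eq_left hs.1, h.q_apply hs.1]
  · refine ae_restrict_of_forall_mem measurableSet_Icc fun s hs => ?_
    have hxC : x s j ≤ C :=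
      (le_abs_self _).trans ((norm_le_pi_norm (x s) j).trans (hC _ (mem_image_of_mem x hs)))
    have hPy : 0 ≤ ∑ k, P k j * y s k :=
      Finset.sum_nonneg fun k _ => mul_nonneg (hP0 k j) (h.y_nonneg hs.1 k)
    have hyτ : y s j ≤ y τ j := h.y_mono j hs.1 hs.2
    rw [Real.norm_of_nonneg (h.q_nonneg hs.1 j), h.q_apply hs.1]
    linarith

theorem y_le_of_forall_le (hP0 : ∀ i j, 0 ≤ P i j) (hx : RCLL x)
    (h : IsSkorohodSolution P x y q) (j : Fin J) {τ b : ℝ} (hτ : 0 ≤ τ) (hb : 0 ≤ b)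
    (hle : ∀ s ∈ Icc 0 τ, ∑ k, P k j * y s k - x s j ≤ b) : y τ j ≤ b := by
  obtain ⟨F, hF, hcompl⟩ := h.2.2.2.2.2 j
  have hFy {s : ℝ} (hs : 0 ≤ s) : F s = y s j := by rw [hF, max_eq_left hs]
  have hnull : F.measure (Function.support (fun s => q s j) ∩ Icc 0 τ) = 0 := by
    have := (setIntegral_pos_iff_support_of_nonneg_ae
      (ae_restrict_of_forall_mem measurableSet_Icc fun s hs => h.q_nonneg hs.1 j)
      (h.integrableOn_q hP0 hx F.measure j τ)).not
    simpa [hcompl τ hτ] using this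
  rw [← hFy hτ]
  refine F.le_of_measure_inter_eq_zero hτ (by rwa [hFy le_rfl, h.2.2.1])
    (measure_mono_null ?_ hnull)
  rintro s ⟨hbs, hs⟩
  have hq : 0 < q s j := by
    rw [h.q_apply hs.1]
    have hbs : b < F s := hbs
    linarith [hle s hs, hFy hs.1]
  exact ⟨hq.ne', hs⟩

variable {x₁ x₂ y₁ y₂ q₁ q₂ : ℝ → Fin J → ℝ}

theorem y_le_add (hP0 : ∀ i j, 0 ≤ P i j) (hx₁ : RCLL x₁)
    (h₁ : IsSkorohodSolution P x₁ y₁ q₁) (h₂ : IsSkorohodSolution P x₂ y₂ q₂) (j : Fin J)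
    {τ c : ℝ} (hτ : 0 ≤ τ) (hc : 0 ≤ c)
    (hdiff : ∀ s ∈ Icc 0 τ, ∑ k, P k j * (y₁ s k - y₂ s k) - (x₁ s j - x₂ s j) ≤ c) :
    y₁ τ j ≤ y₂ τ j + c := by
  refine h₁.y_le_of_forall_le hP0 hx₁ j hτ (add_nonneg (h₂.y_nonneg hτ j) hc) fun s hs => ?_
  have hq₂ : 0 ≤ q₂ s j := h₂.q_nonneg hs.1 j
  have hy₂ : y₂ s j ≤ y₂ τ j := h₂.y_mono j hs.1 hs.2
  have := hdiff s hs
  simp only [mul_sub, Finset.sum_sub_distrib] at this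
  rw [h₂.q_apply hs.1] at hq₂
  linarith

theorem abs_sub_y_le (hP0 : ∀ i j, 0 ≤ P i j) (hx₁ : RCLL x₁) (hx₂ : RCLL x₂)
    (h₁ : IsSkorohodSolution P x₁ y₁ q₁) (h₂ : IsSkorohodSolution P x₂ y₂ q₂) (j : Fin J)
    {τ D : ℝ} {m : Fin J → ℝ} (hτ : 0 ≤ τ) (hD : ∀ s ∈ Icc 0 τ, |x₁ s j - x₂ s j| ≤ D)
    (hm : ∀ s ∈ Icc 0 τ, ∀ k, |y₁ s k - y₂ s k| ≤ m k) :
    |y₁ τ j - y₂ τ j| ≤ (Pᵀ *ᵥ m) j + D := by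
  have h0 : (0 : ℝ) ∈ Icc 0 τ := left_mem_Icc.2 hτ
  have hc : 0 ≤ (Pᵀ *ᵥ m) j + D :=
    add_nonneg (dotProduct_nonneg_of_nonneg (fun k => hP0 k j)
      fun k => (abs_nonneg _).trans (hm 0 h0 k)) ((abs_nonneg _).trans (hD 0 h0))
  have hPm {u v : Fin J → ℝ} (huv : ∀ k, |u k - v k| ≤ m k) :
      ∑ k, P k j * (u k - v k) ≤ (Pᵀ *ᵥ m) j :=
    Finset.sum_le_sum fun k _ => mul_le_mul_of_nonneg_left ((le_abs_self _).trans (huv k)) (hP0 k j)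
  rw [abs_sub_le_iff]
  constructor
  · refine sub_le_iff_le_add'.2 (h₁.y_le_add hP0 hx₁ h₂ j hτ hc fun s hs => ?_)
    linarith [hPm (hm s hs), neg_abs_le (x₁ s j - x₂ s j), hD s hs]
  · refine sub_le_iff_le_add'.2 (h₂.y_le_add hP0 hx₂ h₁ j hτ hc fun s hs => ?_)
    linarith [hPm fun k => abs_sub_comm (y₁ s k) _ ▸ hm s hs k, le_abs_self (x₁ s j - x₂ s j),
      hD s hs]

theorem l1Norm_sub_y_le (hP0 : ∀ i j, 0 ≤ P i j) (hP1 : ∀ i, ∑ j, P i j ≤ 1) {n : ℕ}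
    {c : ℝ} (hc : c < 1) (hn : ∀ i, (P ^ n *ᵥ 1) i ≤ c) (hx₁ : RCLL x₁) (hx₂ : RCLL x₂)
    (h₁ : IsSkorohodSolution P x₁ y₁ q₁) (h₂ : IsSkorohodSolution P x₂ y₂ q₂) {t D : ℝ}
    (ht : 0 ≤ t) (hD : ∀ s ∈ Icc 0 t, l1Norm (x₁ s - x₂ s) ≤ D) {s : ℝ} (hs : s ∈ Icc 0 t) :
    l1Norm (y₁ s - y₂ s) ≤ n * J / (1 - c) * D := by
  have h0 : (0 : ℝ) ∈ Icc 0 t := left_mem_Icc.2 ht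
  have : Nonempty (Icc 0 t) := ⟨⟨0, h0⟩⟩
  set m : Fin J → ℝ := fun k => ⨆ τ : Icc 0 t, |y₁ τ k - y₂ τ k|
  have hbdd (k : Fin J) : BddAbove (range fun τ : Icc 0 t => |y₁ τ k - y₂ τ k|) := by
    refine ⟨y₁ t k + y₂ t k, forall_mem_range.2 fun τ => abs_sub_le_iff.2 ⟨?_, ?_⟩⟩ <;>
      linarith [h₁.y_mono k τ.2.1 τ.2.2, h₂.y_mono k τ.2.1 τ.2.2,
        h₁.y_nonneg τ.2.1 k, h₂.y_nonneg τ.2.1 k]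
  have hle_m {τ : ℝ} (hτ : τ ∈ Icc 0 t) (k : Fin J) : |y₁ τ k - y₂ τ k| ≤ m k :=
    le_ciSup (hbdd k) ⟨τ, hτ⟩
  have hsub : m ≤ Pᵀ *ᵥ m + fun _ => D := fun j => ciSup_le fun τ =>
    have hIcc {r : ℝ} (hr : r ∈ Icc 0 (τ : ℝ)) : r ∈ Icc 0 t := ⟨hr.1, hr.2.trans τ.2.2⟩
    h₁.abs_sub_y_le hP0 hx₁ hx₂ h₂ j τ.2.1
      (fun r hr => (abs_apply_le_l1Norm (x₁ r - x₂ r) j).trans (hD r (hIcc hr)))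
      fun r hr => hle_m (hIcc hr)
  have hD0 : 0 ≤ D := (l1Norm_nonneg _).trans (hD 0 h0)
  have hm0 : 0 ≤ m := fun k => (abs_nonneg _).trans (hle_m h0 k)
  calc l1Norm (y₁ s - y₂ s) ≤ ∑ k, m k := Finset.sum_le_sum fun k _ => hle_m hs k
    _ ≤ n / (1 - c) * ∑ _k : Fin J, D :=
      sum_le_of_le_transpose_mulVec_add hP0 hP1 hc hn hm0 (fun _ => hD0) hsub
    _ = n * J / (1 - c) * D := by
      simp only [Finset.sum_const, Finset.card_univ, Fintype.card_fin, nsmul_eq_mul]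
      ring

theorem l1Norm_sub_q_le (hP0 : ∀ i j, 0 ≤ P i j) (hP1 : ∀ i, ∑ j, P i j ≤ 1)
    (h₁ : IsSkorohodSolution P x₁ y₁ q₁) (h₂ : IsSkorohodSolution P x₂ y₂ q₂) {s : ℝ}
    (hs : 0 ≤ s) :
    l1Norm (q₁ s - q₂ s) ≤ l1Norm (x₁ s - x₂ s) + 2 * l1Norm (y₁ s - y₂ s) := by
  have hq : q₁ s - q₂ s = (x₁ s - x₂ s) + ((y₁ s - y₂ s) - Pᵀ *ᵥ (y₁ s - y₂ s)) := by
    rw [h₁.1 s hs, h₂.1 s hs, sub_mulVec, sub_mulVec, one_mulVec, one_mulVec, mulVec_sub]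
    abel
  rw [hq]
  linarith [l1Norm_add_le (x₁ s - x₂ s) ((y₁ s - y₂ s) - Pᵀ *ᵥ (y₁ s - y₂ s)),
    l1Norm_sub_le (y₁ s - y₂ s) (Pᵀ *ᵥ (y₁ s - y₂ s)),
    l1Norm_transpose_mulVec_le hP0 hP1 (y₁ s - y₂ s)]

end IsSkorohodSolution

theorem skorohod_lipschitz_general {J : ℕ}
    (P : Matrix (Fin J) (Fin J) ℝ) (hP : IsSubstochasticSpecLtOne P) :
    ∃ R₁ R₂ : ℝ, 0 < R₁ ∧ 0 < R₂ ∧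
      ∀ x₁ x₂ y₁ q₁ y₂ q₂ : ℝ → Fin J → ℝ,
        RCLL x₁ → RCLL x₂ → (∀ j, 0 ≤ x₁ 0 j) → (∀ j, 0 ≤ x₂ 0 j) →
        IsSkorohodSolution P x₁ y₁ q₁ → IsSkorohodSolution P x₂ y₂ q₂ →
        ∀ t : ℝ, 0 ≤ t →
          (⨆ τ : Set.Icc (0 : ℝ) t, l1Norm (q₁ τ - q₂ τ)) ≤
              R₁ * ⨆ τ : Set.Icc (0 : ℝ) t, l1Norm (x₁ τ - x₂ τ) ∧
          (⨆ τ : Set.Icc (0 : ℝ) t, l1Norm (y₁ τ - y₂ τ)) ≤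
              R₂ * ⨆ τ : Set.Icc (0 : ℝ) t, l1Norm (x₁ τ - x₂ τ) := by
  obtain ⟨hP0, hP1, hPspec⟩ := hP
  obtain ⟨n, c, hc, hn⟩ := exists_pow_mulVec_one_le hPspec
  have hK : 0 ≤ n * J / (1 - c) := div_nonneg (by positivity) (sub_nonneg.2 hc.le)
  set R₂ := n * J / (1 - c) + 1
  refine ⟨1 + 2 * R₂, R₂, by linarith, by linarith, ?_⟩
  intro x₁ x₂ y₁ q₁ y₂ q₂ hx₁ hx₂ _ _ h₁ h₂ t ht
  have : Nonempty (Icc 0 t) := ⟨⟨0, left_mem_Icc.2 ht⟩⟩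
  set D := ⨆ τ : Icc 0 t, l1Norm (x₁ τ - x₂ τ)
  have hD (s : ℝ) (hs : s ∈ Icc 0 t) : l1Norm (x₁ s - x₂ s) ≤ D :=
    le_ciSup (image_eq_range _ _ ▸ hx₁.bddAbove_l1Norm_sub hx₂ t) ⟨s, hs⟩
  have hD0 : 0 ≤ D := (l1Norm_nonneg _).trans (hD 0 (left_mem_Icc.2 ht))
  have hy (τ : Icc 0 t) : l1Norm (y₁ τ - y₂ τ) ≤ R₂ * D :=
    (h₁.l1Norm_sub_y_le hP0 hP1 hc hn hx₁ hx₂ h₂ ht hD τ.2).trans (by gcongr; linarith)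
  refine ⟨ciSup_le fun τ => ?_, ciSup_le hy⟩
  linarith [h₁.l1Norm_sub_q_le hP0 hP1 h₂ τ.2.1, hD τ τ.2, hy τ]

/-- Lipschitz continuity of the oblique reflection mapping: the solutions of the
Skorohod problem depend Lipschitz-continuously (in the uniform norm on `[0, t]`,
with the `L¹` norm on `ℝ^J`) on the input, with constants depending only on `P`. -/
theorem skorohod_lipschitz {J : ℕ} (hJ : 1 ≤ J)
    (P : Matrix (Fin J) (Fin J) ℝ) (hP : IsSubstochasticSpecLtOne P) :
    ∃ R₁ R₂ : ℝ, 0 < R₁ ∧ 0 < R₂ ∧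
      ∀ x₁ x₂ y₁ q₁ y₂ q₂ : ℝ → Fin J → ℝ,
        RCLL x₁ → RCLL x₂ → (∀ j, 0 ≤ x₁ 0 j) → (∀ j, 0 ≤ x₂ 0 j) →
        IsSkorohodSolution P x₁ y₁ q₁ → IsSkorohodSolution P x₂ y₂ q₂ →
        ∀ t : ℝ, 0 ≤ t →
          (⨆ τ : Set.Icc (0 : ℝ) t, l1Norm (q₁ τ - q₂ τ)) ≤
              R₁ * ⨆ τ : Set.Icc (0 : ℝ) t, l1Norm (x₁ τ - x₂ τ) ∧
          (⨆ τ : Set.Icc (0 : ℝ) t, l1Norm (y₁ τ - y₂ τ)) ≤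
              R₂ * ⨆ τ : Set.Icc (0 : ℝ) t, l1Norm (x₁ τ - x₂ τ) :=
  skorohod_lipschitz_general P hP
end
end

section
/- Let z ∈ ℝ^J with z ≥ 0 componentwise, let α ∈ ℝ^J with α ≥ 0 componentwise, let μ ∈ ℝ^J with μ_j > 0 for all j, set λ = (I − Pᵀ)⁻¹ α and ρ_j = λ_j / μ_j, and assume ρ_j < 1 for every j. Let w = (I − P)⁻¹ e, where e is the all-ones vector, define the linear input x(t) = z + (α − (I − Pᵀ)μ)·t, and let (y, q) be a solution of the Skorohod problem with input x and reflection matrix I − Pᵀ. Then the function t ↦ wᵀ q(t) is Lipschitz continuous on [0,∞), and at every point t > 0 at which q is differentiable and q(t) ≠ 0, the derivative satisfies (d/dt)(wᵀ q)(t) ≤ −min_{1 ≤ j ≤ J} μ_j (1 − ρ_j). -/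
open MeasureTheory Filter Topology

noncomputable section

/-!
The Neumann series `∑ Pᵏ` converges because the spectral radius of `P` is below one (Gelfand's
formula), so `I - P` and `I - Pᵀ` are invertible with entrywise nonnegative inverses. Since
`(I - P) w = e`, the workload is `wᵀ q(t) = wᵀ x(t) + ∑ⱼ yⱼ(t)`.

For the Lipschitz bound, complementarity says that `dyⱼ` does not charge `{qⱼ ≠ 0}`; so `yⱼ`
can only increase while `qⱼ` touches zero, where `yⱼ` is pinned by the barrier
`-xⱼ + ∑ₖ Pₖⱼ yₖ`. This gives `(I - Pᵀ)(y(t) - y(s)) ≤ |b| (t - s)` for the drift `b` of `x`,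
and inverting, `0 ≤ y(t) - y(s) ≤ (I - Pᵀ)⁻¹ |b| (t - s)`.

For the drift, write `v = μ - λ > 0`, so that `b = -(I - Pᵀ) v`. Where `q` is differentiable,
`q̇ = (I - Pᵀ)(ẏ - v)`, with `ẏⱼ = 0` where `qⱼ > 0` and `q̇ⱼ = 0` where `qⱼ = 0`; a comparison
principle for the inverse-positive matrix `I - Pᵀ` gives `ẏ ≤ v`, so
`wᵀ q̇ = ∑ⱼ (ẏⱼ - vⱼ) ≤ -vⱼ₀` for any `j₀` with `qⱼ₀(t) > 0`.
-/

open Set Matrix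

theorem spectrum.summable_pow_of_spectralRadius_lt_one {A : Type*} [NormedRing A]
    [NormedAlgebra ℂ A] [CompleteSpace A] {a : A} (h : spectralRadius ℂ a < 1) :
    Summable (a ^ ·) := by
  obtain ⟨r, hr, hr1⟩ := ENNReal.lt_iff_exists_nnreal_btwn.1 h
  have hr1 : r < 1 := by exact_mod_cast hr1
  refine .of_norm_bounded_eventually_nat (summable_geometric_of_lt_one r.2 hr1) ?_
  filter_upwards [(pow_nnnorm_pow_one_div_tendsto_nhds_spectralRadius a).eventually_lt_const hr,
    eventually_gt_atTop 0] with k hk hk0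
  rw [one_div, ← ENNReal.coe_rpow_of_nonneg _ (by positivity), ENNReal.coe_lt_coe,
    NNReal.rpow_inv_lt_iff (by positivity), NNReal.rpow_natCast] at hk
  exact_mod_cast hk.le

theorem MeasureTheory.measure_setOf_mem_and_ne_zero_eq_zero_of_setIntegral_eq_zero
    {α : Type*} [MeasurableSpace α] {μ : Measure α} {s : Set α} {f : α → ℝ}
    (hs : MeasurableSet s) (hf : IntegrableOn f s μ) (hnn : ∀ a ∈ s, 0 ≤ f a)
    (h : ∫ a in s, f a ∂μ = 0) : μ {a | a ∈ s ∧ f a ≠ 0} = 0 := by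
  have hae := (setIntegral_eq_zero_iff_of_nonneg_ae
    ((ae_restrict_iff' hs).2 (ae_of_all _ hnn)) hf).1 h
  rw [EventuallyEq, ae_restrict_iff' hs, ae_iff] at hae
  simpa only [Pi.zero_apply, Classical.not_imp] using hae

namespace Matrix

variable {n : Type*} [Fintype n]

theorem mulVec_mono {Q : Matrix n n ℝ} (hQ : ∀ i j, 0 ≤ Q i j) {a b : n → ℝ} (h : a ≤ b) :
    Q *ᵥ a ≤ Q *ᵥ b := fun i =>
  Finset.sum_le_sum fun j _ => mul_le_mul_of_nonneg_left (h j) (hQ i j)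

variable [DecidableEq n]

theorem le_of_mulVec_le {A : Matrix n n ℝ} (hdet : IsUnit A.det) (hinv : ∀ i j, 0 ≤ A⁻¹ i j)
    {a b : n → ℝ} (h : A *ᵥ a ≤ A *ᵥ b) : a ≤ b := by
  have := mulVec_mono hinv h
  rwa [mulVec_mulVec, mulVec_mulVec, nonsing_inv_mul _ hdet, one_mulVec, one_mulVec] at this

theorem le_of_mulVec_sub_eq_zero_or_eq_zero {Q : Matrix n n ℝ} (hQ : ∀ i j, 0 ≤ Q i j)
    (hdet : IsUnit (1 - Q).det) (hinv : ∀ i j, 0 ≤ (1 - Q)⁻¹ i j) {u v : n → ℝ} (hv : 0 ≤ v)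
    (h : ∀ i, ((1 - Q) *ᵥ (u - v)) i = 0 ∨ u i = 0) : u ≤ v := by
  -- the positive part `e` of `u - v` satisfies `e ≤ Q *ᵥ e`, i.e. `(1 - Q) *ᵥ e ≤ 0`
  set e : n → ℝ := fun i => max (u i - v i) 0
  have hle : u - v ≤ e := fun i => le_max_left _ _
  have hQe : 0 ≤ Q *ᵥ e := by
    simpa using mulVec_mono hQ (fun i => le_max_right _ _ : (0 : n → ℝ) ≤ e)
  have he : e ≤ 0 := le_of_mulVec_le hdet hinv fun i => by
    rw [mulVec_zero, sub_mulVec, one_mulVec, Pi.sub_apply, Pi.zero_apply, sub_nonpos]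
    refine max_le ?_ (hQe i)
    rcases h i with h0 | h0
    · rw [sub_mulVec, one_mulVec, Pi.sub_apply, sub_eq_zero] at h0
      exact h0.le.trans (mulVec_mono hQ hle i)
    · rw [h0, zero_sub]
      exact (neg_nonpos.2 (hv i)).trans (hQe i)
  exact fun i => sub_nonpos.1 ((hle i).trans (he i))

theorem inv_one_sub_eq_tsum_pow {Q : Matrix n n ℝ} (hQ : Summable (Q ^ ·)) :
    IsUnit (1 - Q).det ∧ (1 - Q)⁻¹ = ∑' k, Q ^ k :=
  ⟨isUnit_det_of_right_inverse hQ.one_sub_mul_tsum_pow, inv_eq_right_inv hQ.one_sub_mul_tsum_pow⟩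

theorem inv_one_sub_apply_nonneg {Q : Matrix n n ℝ} (hQ0 : ∀ i j, 0 ≤ Q i j)
    (hQ : Summable (Q ^ ·)) (i j : n) : 0 ≤ (1 - Q)⁻¹ i j := by
  rw [(inv_one_sub_eq_tsum_pow hQ).2]
  exact (Pi.hasSum.1 (Pi.hasSum.1 hQ.hasSum i) j).nonneg fun k => pow_apply_nonneg hQ0 k i j

theorem summable_pow_of_forall_spectrum_norm_lt_one {P : Matrix n n ℝ}
    (h : ∀ μ ∈ spectrum ℂ (P.map (algebraMap ℝ ℂ)), ‖μ‖ < 1) : Summable (P ^ ·) := by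
  -- any Banach-algebra norm on complex matrices will do; the spectrum does not depend on it
  let : NormedRing (Matrix n n ℂ) := Matrix.linftyOpNormedRing
  let : NormedAlgebra ℂ (Matrix n n ℂ) := Matrix.linftyOpNormedAlgebra
  have hrad : spectralRadius ℂ (P.map (algebraMap ℝ ℂ)) < 1 := by
    rcases (spectrum ℂ (P.map (algebraMap ℝ ℂ))).eq_empty_or_nonempty with he | hne
    · rw [spectralRadius, he]; simp
    · exact_mod_cast spectrum.spectralRadius_lt_of_forall_lt_of_nonempty hne (r := 1)
        (by simpa [← NNReal.coe_lt_coe] using h)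
  convert (spectrum.summable_pow_of_spectralRadius_lt_one hrad).map Complex.reAddGroupHom.mapMatrix
    (continuous_id.matrix_map Complex.continuous_re) with k
  ext i j
  have hpow : P.map (algebraMap ℝ ℂ) ^ k = (P ^ k).map (algebraMap ℝ ℂ) :=
    (map_pow (algebraMap ℝ ℂ).mapMatrix P k).symm
  change _ = ((P.map (algebraMap ℝ ℂ) ^ k) i j).re
  rw [hpow]
  simp

variable {R : Type*} [CommRing R]

theorem one_sub_transpose_mulVec_apply (P : Matrix n n R) (v : n → R) (j : n) :
    ((1 - Pᵀ) *ᵥ v) j = v j - ∑ k, P k j * v k := by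
  simp only [sub_mulVec, one_mulVec, Pi.sub_apply, mulVec_transpose, vecMul, dotProduct, mul_comm]

theorem dotProduct_one_sub_transpose_mulVec {P : Matrix n n R} {w : n → R}
    (hw : (1 - P) *ᵥ w = 1) (v : n → R) : w ⬝ᵥ ((1 - Pᵀ) *ᵥ v) = ∑ j, v j := by
  rw [dotProduct_mulVec, ← transpose_one, ← transpose_sub, vecMul_transpose, hw, one_dotProduct]

end Matrix

namespace StieltjesFunction

variable (F : StieltjesFunction ℝ)

theorem le_of_measure_Ioc_eq_zero {a b : ℝ} (h : F.measure (Ioc a b) = 0) : F b ≤ F a := by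
  rwa [measure_Ioc, ENNReal.ofReal_eq_zero, sub_nonpos] at h

theorem eventuallyEq_of_measure_eq_zero {U : Set ℝ} {t : ℝ} (hU : U ∈ 𝓝 t)
    (h : F.measure U = 0) : F =ᶠ[𝓝 t] fun _ => F t := by
  obtain ⟨l, r, ⟨hl, hr⟩, hlr⟩ := mem_nhds_iff_exists_Ioo_subset.1 hU
  filter_upwards [Ioo_mem_nhds hl hr] with s hs
  rcases le_total s t with hst | hts
  · exact le_antisymm (F.mono hst) (F.le_of_measure_Ioc_eq_zero <|
      measure_mono_null (fun u hu => hlr ⟨hs.1.trans hu.1, hu.2.trans_lt hr⟩) h)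
  · exact le_antisymm (F.le_of_measure_Ioc_eq_zero <|
      measure_mono_null (fun u hu => hlr ⟨hl.trans hu.1, hu.2.trans_lt hs.2⟩) h) (F.mono hts)

theorem le_or_exists_le_of_measure_setOf_lt_eq_zero {φ : ℝ → ℝ} (hφ : Continuous φ) {s t : ℝ}
    (h : F.measure {u | u ∈ Ioc s t ∧ φ u < F u} = 0) :
    F t ≤ F s ∨ ∃ c ∈ Ioc s t, F t ≤ φ c := by
  set A := {u | u ∈ Ioc s t ∧ F u ≤ φ u}
  have hnotA : ∀ u ∈ Ioc s t, u ∉ A → u ∈ {u | u ∈ Ioc s t ∧ φ u < F u} :=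
    fun u hu huA => ⟨hu, not_le.1 fun hle => huA ⟨hu, hle⟩⟩
  rcases A.eq_empty_or_nonempty with hA | ⟨a, ha⟩
  · exact .inl <| F.le_of_measure_Ioc_eq_zero <| measure_mono_null
      (fun u hu => hnotA u hu (hA ▸ notMem_empty u)) h
  have hbdd : BddAbove A := ⟨t, fun u hu => hu.1.2⟩
  have hc : sSup A ∈ Ioc s t :=
    ⟨ha.1.1.trans_le (le_csSup hbdd ha), csSup_le ⟨a, ha⟩ fun u hu => hu.1.2⟩
  refine .inr ⟨sSup A, hc, ?_⟩
  have htc : F t ≤ F (sSup A) := F.le_of_measure_Ioc_eq_zero <| measure_mono_null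
    (fun u hu => hnotA u ⟨hc.1.trans hu.1, hu.2⟩ (notMem_of_csSup_lt hu.1 hbdd)) h
  refine htc.trans ?_
  by_cases hcA : sSup A ∈ A
  · exact hcA.2
  -- without an atom at `sSup A`, `F` is left-continuous there and `F ≤ φ` passes to the limit
  have hatom : F.measure {sSup A} = 0 :=
    measure_mono_null (singleton_subset_iff.2 (hnotA _ hc hcA)) h
  have hcont : ContinuousWithinAt F (Iio (sSup A)) (sSup A) := by
    rw [F.mono.continuousWithinAt_Iio_iff_leftLim_eq]
    rw [measure_singleton, ENNReal.ofReal_eq_zero, sub_nonpos] at hatom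
    exact le_antisymm (F.mono.leftLim_le le_rfl) hatom
  have hAc : A ⊆ Iio (sSup A) := fun u hu =>
    (le_csSup hbdd hu).lt_of_ne fun hu' => hcA (hu' ▸ hu)
  exact ContinuousWithinAt.closure_le (csSup_mem_closure ⟨a, ha⟩ hbdd) (hcont.mono hAc)
    hφ.continuousWithinAt fun u hu => hu.2

end StieltjesFunction

namespace IsSkorohodSolution

variable {J : ℕ} {P : Matrix (Fin J) (Fin J) ℝ} {x y q : ℝ → Fin J → ℝ}
  (hsol : IsSkorohodSolution P x y q)
include hsol

theorem apply_eq_add_sub_sum {t : ℝ} (ht : 0 ≤ t) (j : Fin J) :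
    q t j = x t j + y t j - ∑ k, P k j * y t k := by
  rw [hsol.1 t ht, Pi.add_apply, one_sub_transpose_mulVec_apply]
  ring

theorem exists_stieltjesFunction_measure_support_eq_zero (hx : Continuous x) (j : Fin J) :
    ∃ F : StieltjesFunction ℝ, (∀ s, 0 ≤ s → F s = y s j) ∧
      F.measure (Ici 0 ∩ Function.support (q · j)) = 0 := by
  have ⟨_, hq0, _, hmono, _, hstieltjes⟩ := hsol
  obtain ⟨F, hFy, hint⟩ := hstieltjes j
  refine ⟨F, fun s hs => by rw [hFy, max_eq_left hs], ?_⟩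
  have hnull : ∀ T : ℕ, F.measure {s | s ∈ Icc 0 (T : ℝ) ∧ q s j ≠ 0} = 0 := fun T => by
    have hmonoT : ∀ k, MonotoneOn (y · k) (Icc 0 (T : ℝ)) :=
      fun k => (hmono k).mono Icc_subset_Ici_self
    have hint_q : IntegrableOn (q · j) (Icc 0 (T : ℝ)) F.measure :=
      IntegrableOn.congr_fun
        ((((continuous_apply j).comp hx).integrableOn_Icc.add
          ((hmonoT j).integrableOn_isCompact isCompact_Icc)).sub
          (integrable_finsetSum _ fun k _ =>
            ((hmonoT k).integrableOn_isCompact isCompact_Icc).const_mul (P k j)))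
        (fun s hs => (hsol.apply_eq_add_sub_sum hs.1 j).symm) measurableSet_Icc
    exact measure_setOf_mem_and_ne_zero_eq_zero_of_setIntegral_eq_zero measurableSet_Icc hint_q
      (fun s hs => hq0 s hs.1 j) (hint T T.cast_nonneg)
  refine measure_mono_null (fun s hs => ?_) (measure_iUnion_null hnull)
  obtain ⟨T, hT⟩ := exists_nat_ge s
  exact mem_iUnion.2 ⟨T, ⟨hs.1, hT⟩, hs.2⟩

theorem mulVec_sub_apply_le (hP : ∀ i j, 0 ≤ P i j) {z b : Fin J → ℝ}
    (hx : ∀ t, x t = fun j => z j + b j * t) {s t : ℝ} (hs : 0 ≤ s) (hst : s ≤ t) (j : Fin J) :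
    ((1 - Pᵀ) *ᵥ (y t - y s)) j ≤ |b j| * (t - s) := by
  obtain rfl : x = fun t j => z j + b j * t := funext hx
  have ⟨_, hq0, _, hmono, _⟩ := hsol
  obtain ⟨F, hF, hnull⟩ := hsol.exists_stieltjesFunction_measure_support_eq_zero (by fun_prop) j
  have hyt : ∀ u, 0 ≤ u → u ≤ t → ∑ k, P k j * y u k ≤ ∑ k, P k j * y t k := fun u hu hut =>
    Finset.sum_le_sum fun k _ =>
      mul_le_mul_of_nonneg_left (hmono k hu (hu.trans hut) hut) (hP k j)
  -- on the zero set of `q · j`, `y · j` lies below the continuous barrier `φ`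
  set φ : ℝ → ℝ := fun u => -(z j + b j * u) + ∑ k, P k j * y t k
  have hsub : {u | u ∈ Ioc s t ∧ φ u < F u} ⊆ Ici 0 ∩ Function.support (q · j) := by
    rintro u ⟨hu, hlt⟩
    have hu0 : 0 ≤ u := hs.trans hu.1.le
    refine ⟨hu0, fun hq => hlt.not_ge ?_⟩
    have := hsol.apply_eq_add_sub_sum hu0 j
    rw [hF u hu0]
    linarith [hyt u hu0 hu.2]
  have hqs := hsol.apply_eq_add_sub_sum hs j
  have hqs0 := hq0 s hs j
  rw [one_sub_transpose_mulVec_apply]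
  simp only [Pi.sub_apply, mul_sub, Finset.sum_sub_distrib]
  rcases F.le_or_exists_le_of_measure_setOf_lt_eq_zero (by fun_prop) (measure_mono_null hsub hnull)
    with hle | ⟨c, hc, hle⟩
  · rw [hF t (hs.trans hst), hF s hs] at hle
    have : 0 ≤ |b j| * (t - s) := mul_nonneg (abs_nonneg _) (sub_nonneg.2 hst)
    linarith [hyt s hs hst]
  · rw [hF t (hs.trans hst)] at hle
    have : b j * (s - c) ≤ |b j| * (t - s) := calc
      b j * (s - c) ≤ |b j| * (c - s) := by
        rw [← abs_of_nonneg (sub_nonneg.2 hc.1.le), ← abs_mul, ← neg_sub c s, mul_neg]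
        exact neg_le_abs _
      _ ≤ |b j| * (t - s) := by gcongr; exact hc.2
    linarith

theorem sum_sub_le (hP : ∀ i j, 0 ≤ P i j) (hdet : IsUnit (1 - Pᵀ).det)
    (hinv : ∀ i j, 0 ≤ (1 - Pᵀ)⁻¹ i j) {z b : Fin J → ℝ}
    (hx : ∀ t, x t = fun j => z j + b j * t) {s t : ℝ} (hs : 0 ≤ s) (hst : s ≤ t) :
    ∑ j, (y t j - y s j) ≤ (t - s) * ∑ j, ((1 - Pᵀ)⁻¹ *ᵥ |b|) j := by
  have hle : y t - y s ≤ (1 - Pᵀ)⁻¹ *ᵥ ((t - s) • |b|) := le_of_mulVec_le hdet hinv fun j => by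
    rw [mulVec_mulVec, mul_nonsing_inv _ hdet, one_mulVec, Pi.smul_apply, Pi.abs_apply,
      smul_eq_mul, mul_comm]
    exact hsol.mulVec_sub_apply_le hP hx hs hst j
  rw [mulVec_smul, Finset.mul_sum] at *
  exact Finset.sum_le_sum fun j _ => hle j

theorem dotProduct_eq_add_sum {w : Fin J → ℝ} (hw : (1 - P) *ᵥ w = 1) {t : ℝ} (ht : 0 ≤ t) :
    w ⬝ᵥ q t = w ⬝ᵥ x t + ∑ j, y t j := by
  rw [hsol.1 t ht, dotProduct_add, dotProduct_one_sub_transpose_mulVec hw]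

theorem lipschitzOnWith_dotProduct (hP : ∀ i j, 0 ≤ P i j) (hdet : IsUnit (1 - Pᵀ).det)
    (hinv : ∀ i j, 0 ≤ (1 - Pᵀ)⁻¹ i j) {w z b : Fin J → ℝ} (hw : (1 - P) *ᵥ w = 1)
    (hx : ∀ t, x t = fun j => z j + b j * t) :
    ∃ L, LipschitzOnWith L (fun t => w ⬝ᵥ q t) (Ici 0) := by
  set K := ∑ j, ((1 - Pᵀ)⁻¹ *ᵥ |b|) j
  have hK : 0 ≤ K := Finset.sum_nonneg fun j _ => by
    simpa using mulVec_mono hinv (abs_nonneg b) j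
  have hwx : ∀ t, w ⬝ᵥ x t = w ⬝ᵥ z + (w ⬝ᵥ b) * t := fun t => by
    simp only [hx, dotProduct, mul_add, Finset.sum_add_distrib, Finset.sum_mul, mul_assoc]
  refine ⟨_, LipschitzOnWith.of_le_add_mul' (|w ⬝ᵥ b| + K) fun t ht s hs => ?_⟩
  rw [hsol.dotProduct_eq_add_sum hw ht, hsol.dotProduct_eq_add_sum hw hs, hwx, hwx, Real.dist_eq]
  have hc : (w ⬝ᵥ b) * (t - s) ≤ |w ⬝ᵥ b| * |t - s| := by rw [← abs_mul]; exact le_abs_self _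
  rcases le_total s t with h | h
  · have := hsol.sum_sub_le hP hdet hinv hx hs h
    rw [Finset.sum_sub_distrib] at this
    rw [abs_of_nonneg (sub_nonneg.2 h)] at hc ⊢
    linarith
  · have hY : ∑ j, y t j ≤ ∑ j, y s j :=
      Finset.sum_le_sum fun k _ => hsol.2.2.2.1 k ht hs h
    have := mul_nonneg hK (sub_nonneg.2 h)
    rw [abs_of_nonpos (sub_nonpos.2 h)] at hc ⊢
    linarith

theorem hasDerivAt_regulator {b d : Fin J → ℝ} {t : ℝ} (hdet : IsUnit (1 - Pᵀ).det)
    (hx : HasDerivAt x b t) (ht : 0 < t) (hd : HasDerivAt q d t) :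
    HasDerivAt y ((1 - Pᵀ)⁻¹ *ᵥ (d - b)) t := by
  have hy : y =ᶠ[𝓝 t] fun s => (1 - Pᵀ)⁻¹ *ᵥ (q s - x s) := by
    filter_upwards [Ioi_mem_nhds ht] with s hs
    rw [hsol.1 s hs.le, add_sub_cancel_left, mulVec_mulVec, nonsing_inv_mul _ hdet, one_mulVec]
  exact (((1 - Pᵀ)⁻¹.mulVecLin.toContinuousLinearMap.hasFDerivAt).comp_hasDerivAt t
    (hd.sub hx)).congr_of_eventuallyEq hy

theorem eq_zero_of_hasDerivAt_regulator_of_pos (hx : Continuous x) {j : Fin J} {t u : ℝ}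
    (ht : 0 < t) (hq : ContinuousAt (q · j) t) (hpos : 0 < q t j)
    (hy : HasDerivAt (y · j) u t) : u = 0 := by
  obtain ⟨F, hF, hnull⟩ := hsol.exists_stieltjesFunction_measure_support_eq_zero hx j
  have hU : Ioi 0 ∩ {s | 0 < q s j} ∈ 𝓝 t :=
    inter_mem (Ioi_mem_nhds ht) (hq.eventually (Ioi_mem_nhds hpos))
  have hconst := F.eventuallyEq_of_measure_eq_zero hU <|
    measure_mono_null (inter_subset_inter Ioi_subset_Ici_self fun _ hs => hs.ne') hnull
  have hyc : (y · j) =ᶠ[𝓝 t] fun _ => y t j := by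
    filter_upwards [hconst, Ioi_mem_nhds ht] with s hs hs0
    rw [← hF s hs0.le, hs, hF t ht.le]
  exact hy.unique ((hasDerivAt_const t _).congr_of_eventuallyEq hyc)

theorem dotProduct_le_neg_iInf (hP : ∀ i j, 0 ≤ P i j) (hdet : IsUnit (1 - Pᵀ).det)
    (hinv : ∀ i j, 0 ≤ (1 - Pᵀ)⁻¹ i j) {w z b v : Fin J → ℝ} (hw : (1 - P) *ᵥ w = 1)
    (hx : ∀ t, x t = fun j => z j + b j * t) (hv : 0 ≤ v) (hb : (1 - Pᵀ) *ᵥ v = -b)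
    {t : ℝ} {d : Fin J → ℝ} (ht : 0 < t) (hd : HasDerivAt q d t) (hq : q t ≠ 0) :
    w ⬝ᵥ d ≤ -⨅ j, v j := by
  obtain rfl : x = fun t j => z j + b j * t := funext hx
  have hq0 := hsol.2.1
  set u := (1 - Pᵀ)⁻¹ *ᵥ (d - b)
  have hy : HasDerivAt y u t := hsol.hasDerivAt_regulator hdet (hasDerivAt_pi.2 fun j => by
    simpa using ((hasDerivAt_id t).const_mul (b j)).const_add (z j)) ht hd
  have hdu : (1 - Pᵀ) *ᵥ (u - v) = d := by
    rw [mulVec_sub, hb, mulVec_mulVec, mul_nonsing_inv _ hdet, one_mulVec, sub_neg_eq_add,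
      sub_add_cancel]
  have hu0 : ∀ j, q t j ≠ 0 → u j = 0 := fun j hj =>
    hsol.eq_zero_of_hasDerivAt_regulator_of_pos (by fun_prop) ht
      (hasDerivAt_pi.1 hd j).continuousAt ((hq0 t ht.le j).lt_of_ne' hj)
      (hasDerivAt_pi.1 hy j)
  have hd0 : ∀ j, q t j = 0 → d j = 0 := fun j hj => by
    have hmin : IsLocalMin (q · j) t := by
      filter_upwards [Ioi_mem_nhds ht] with s hs
      rw [hj]
      exact hq0 s hs.le j
    exact hmin.hasDerivAt_eq_zero (hasDerivAt_pi.1 hd j)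
  have huv : u ≤ v := le_of_mulVec_sub_eq_zero_or_eq_zero (fun i j => hP j i) hdet hinv hv
    fun j => by
      by_cases hj : q t j = 0
      · exact .inl (hdu ▸ hd0 j hj)
      · exact .inr (hu0 j hj)
  obtain ⟨j₀, hj₀⟩ : ∃ j, q t j ≠ 0 := by
    by_contra! h
    exact hq (funext h)
  have hsum := Finset.single_le_sum (f := fun j => v j - u j) (fun j _ => sub_nonneg.2 (huv j))
    (Finset.mem_univ j₀)
  calc w ⬝ᵥ d = ∑ j, (u j - v j) := by rw [← hdu, dotProduct_one_sub_transpose_mulVec hw]; rfl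
    _ ≤ -v j₀ := by
      simp only [Finset.sum_sub_distrib] at hsum ⊢
      linarith [hu0 j₀ hj₀]
    _ ≤ -⨅ j, v j := neg_le_neg (ciInf_le (Finite.bddBelow_range _) j₀)

end IsSkorohodSolution

theorem fluid_workload_lipschitz_and_drift_general {J : ℕ}
    (P : Matrix (Fin J) (Fin J) ℝ) (hP : IsSubstochasticSpecLtOne P)
    (z α μ : Fin J → ℝ)
    (hμ : ∀ j, 0 < μ j)
    (lam : Fin J → ℝ) (hlam : lam = ((1 - P.transpose)⁻¹).mulVec α)
    (hρ : ∀ j, lam j / μ j < 1)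
    (w : Fin J → ℝ) (hw : w = ((1 - P)⁻¹).mulVec (fun _ => 1))
    (x : ℝ → Fin J → ℝ)
    (hx : ∀ t : ℝ, x t = fun j => z j + (α j - ((1 - P.transpose).mulVec μ) j) * t)
    (y q : ℝ → Fin J → ℝ) (hsol : IsSkorohodSolution P x y q) :
    (∃ L : NNReal, LipschitzOnWith L (fun t => dotProduct w (q t)) (Set.Ici (0 : ℝ))) ∧
    ∀ t : ℝ, 0 < t → ∀ d : Fin J → ℝ, HasDerivAt q d t → q t ≠ 0 →
      dotProduct w d ≤ -(⨅ j, μ j * (1 - lam j / μ j)) := by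
  obtain ⟨hP0, -, hspec⟩ := hP
  have hsum := summable_pow_of_forall_spectrum_norm_lt_one hspec
  have hsumT : Summable (Pᵀ ^ ·) := by
    simpa only [transpose_pow] using hsum.matrix_transpose
  have hdetT := (inv_one_sub_eq_tsum_pow hsumT).1
  have hinvT := inv_one_sub_apply_nonneg (fun i j => hP0 j i) hsumT
  have hw1 : (1 - P) *ᵥ w = 1 := by
    rw [hw, mulVec_mulVec, mul_nonsing_inv _ (inv_one_sub_eq_tsum_pow hsum).1, one_mulVec]
    rfl
  refine ⟨hsol.lipschitzOnWith_dotProduct hP0 hdetT hinvT hw1 hx, fun t ht d hd hq => ?_⟩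
  have hb : (1 - Pᵀ) *ᵥ (μ - lam) = -(α - (1 - Pᵀ) *ᵥ μ) := by
    rw [mulVec_sub, hlam, mulVec_mulVec, mul_nonsing_inv _ hdetT, one_mulVec, neg_sub]
  have hinf : ⨅ j, μ j * (1 - lam j / μ j) = ⨅ j, (μ - lam) j :=
    iInf_congr fun j => by field_simp [(hμ j).ne']; rfl
  rw [hinf]
  exact hsol.dotProduct_le_neg_iInf hP0 hdetT hinvT hw1 hx
    (fun j => sub_nonneg.2 ((div_lt_one (hμ j)).1 (hρ j)).le) hb ht hd hq

/-- The fluid workload `t ↦ wᵀ q(t)` is Lipschitz on `[0, ∞)`, and wherever `q`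
is differentiable with `q(t) ≠ 0`, the derivative of the workload is at most
`−min_j μ_j (1 − ρ_j)`. -/
theorem fluid_workload_lipschitz_and_drift {J : ℕ} (hJ : 0 < J)
    (P : Matrix (Fin J) (Fin J) ℝ) (hP : IsSubstochasticSpecLtOne P)
    (z α μ : Fin J → ℝ) (hz : ∀ j, 0 ≤ z j) (hα : ∀ j, 0 ≤ α j)
    (hμ : ∀ j, 0 < μ j)
    (lam : Fin J → ℝ) (hlam : lam = ((1 - P.transpose)⁻¹).mulVec α)
    (hρ : ∀ j, lam j / μ j < 1)
    (w : Fin J → ℝ) (hw : w = ((1 - P)⁻¹).mulVec (fun _ => 1))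
    (x : ℝ → Fin J → ℝ)
    (hx : ∀ t : ℝ, x t = fun j => z j + (α j - ((1 - P.transpose).mulVec μ) j) * t)
    (y q : ℝ → Fin J → ℝ) (hsol : IsSkorohodSolution P x y q) :
    (∃ L : NNReal, LipschitzOnWith L (fun t => dotProduct w (q t)) (Set.Ici (0 : ℝ))) ∧
    ∀ t : ℝ, 0 < t → ∀ d : Fin J → ℝ, HasDerivAt q d t → q t ≠ 0 →
      dotProduct w d ≤ -(⨅ j, μ j * (1 - lam j / μ j)) :=
  fluid_workload_lipschitz_and_drift_general P hP z α μ hμ lam hlam hρ w hw x hx y q hsol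
end
end

section
/- Suppose Φ is a geometric Lyapunov function for κ with geometric drift size γ ∈ (0,1) and exception parameter K ≥ 0, suppose there is a constant φ₀ ≥ 0 such that ∫ Φ(y) κ(x, dy) ≤ φ₀ · Φ(x) for every x ∈ S, and suppose π is a stationary probability measure for κ. Then ∫ Φ dπ ≤ φ₀ · K / (1 − γ). -/
/-! Integrating the drift inequality `∫ f dκ(x,·) ≤ γ f(x) + c` against `π` and using stationarity
gives `∫ f dπ ≤ γ ∫ f dπ + c`, which is the claim once `∫ f dπ < ∞`. To avoid assuming that,
run the same step on the bounded functions `min (γⁿ f) m`: telescoping gives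
`∫ min f m dπ ≤ ∫ min (γⁿ f) m dπ + c ∑ γⁱ`, the first term tends to `0` by dominated
convergence, and monotone convergence in `m` finishes. -/

open MeasureTheory ProbabilityTheory ENNReal

noncomputable section

/-- A probability measure `π` is stationary for the Markov kernel `κ` if
`π.bind κ = π`. -/
def IsStationaryMeasure {S : Type*} [MeasurableSpace S]
    (κ : Kernel S S) (π : Measure S) : Prop :=
  π.bind (fun x => κ x) = π

/-- `Φ` is a geometric Lyapunov function for `κ` with geometric drift size `γ`
and exception parameter `K`: `∫ Φ dκ(x,·) ≤ γ Φ(x)` whenever `Φ(x) > K`. -/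
def IsGeomLyapunov {S : Type*} [MeasurableSpace S]
    (κ : Kernel S S) (Φ : S → ℝ≥0∞) (γ K : ℝ≥0∞) : Prop :=
  ∀ x, K < Φ x → ∫⁻ y, Φ y ∂(κ x) ≤ γ * Φ x

open Filter Topology

namespace ENNReal

theorem le_tsum_of_le_add_of_tendsto_zero {a b : ℕ → ℝ≥0∞} (h : ∀ n, a n ≤ a (n + 1) + b n)
    (ha : Tendsto a atTop (𝓝 0)) : a 0 ≤ ∑' n, b n := by
  have hpartial : ∀ n, a 0 ≤ a n + ∑ i ∈ Finset.range n, b i := by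
    intro n
    induction n with
    | zero => simp
    | succ n ih =>
      calc a 0 ≤ a n + ∑ i ∈ Finset.range n, b i := ih
        _ ≤ a (n + 1) + b n + ∑ i ∈ Finset.range n, b i := by gcongr; exact h n
        _ = a (n + 1) + ∑ i ∈ Finset.range (n + 1), b i := by
          rw [Finset.sum_range_succ]; ring
  have hlim : Tendsto (fun n => a n + ∑' i, b i) atTop (𝓝 (∑' i, b i)) := by
    simpa using ha.add_const (∑' i, b i)
  exact ge_of_tendsto' hlim fun n => (hpartial n).trans (by gcongr; exact ENNReal.sum_le_tsum _)

theorem iSup_min_natCast (a : ℝ≥0∞) : ⨆ n : ℕ, min a n = a := by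
  rw [← inf_iSup_eq, iSup_natCast, inf_top_eq]

end ENNReal

namespace MeasureTheory

variable {α : Type*} [MeasurableSpace α]

theorem lintegral_min_le_min_lintegral (μ : Measure α) [IsProbabilityMeasure μ]
    (f : α → ℝ≥0∞) (m : ℝ≥0∞) : ∫⁻ x, min (f x) m ∂μ ≤ min (∫⁻ x, f x ∂μ) m :=
  le_min (lintegral_mono fun _ => min_le_left _ _)
    ((lintegral_mono fun _ => min_le_right _ _).trans_eq (by simp))

theorem tendsto_lintegral_min_pow_mul {μ : Measure α} [IsFiniteMeasure μ] {f : α → ℝ≥0∞}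
    (hf : Measurable f) (hfin : ∀ᵐ x ∂μ, f x ≠ ∞) {γ : ℝ≥0∞} (hγ : γ < 1)
    {m : ℝ≥0∞} (hm : m ≠ ∞) :
    Tendsto (fun n : ℕ => ∫⁻ x, min (γ ^ n * f x) m ∂μ) atTop (𝓝 0) := by
  have hpow : Tendsto (fun n : ℕ => γ ^ n) atTop (𝓝 0) :=
    ENNReal.tendsto_pow_atTop_nhds_zero_of_lt_one hγ
  have hpointwise : ∀ᵐ x ∂μ, Tendsto (fun n : ℕ => min (γ ^ n * f x) m) atTop (𝓝 0) := by
    filter_upwards [hfin] with x hx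
    have hmul : Tendsto (fun n : ℕ => γ ^ n * f x) atTop (𝓝 0) := by
      simpa using ENNReal.Tendsto.mul_const hpow (Or.inr hx)
    exact tendsto_of_tendsto_of_tendsto_of_le_of_le tendsto_const_nhds hmul
      (fun _ => zero_le) (fun _ => min_le_left _ _)
  simpa using tendsto_lintegral_of_dominated_convergence (fun _ => m)
    (fun _ => (hf.const_mul _).min measurable_const)
    (fun _ => ae_of_all _ fun _ => min_le_right _ _)
    (by simpa using mul_ne_top hm (measure_ne_top μ _)) hpointwise

end MeasureTheory

section Stationary

variable {S : Type*} [MeasurableSpace S] {κ : Kernel S S} {π : Measure S}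

theorem IsStationaryMeasure.lintegral_le_lintegral_kernel (hπ : IsStationaryMeasure κ π)
    (f : S → ℝ≥0∞) : ∫⁻ x, f x ∂π ≤ ∫⁻ x, ∫⁻ y, f y ∂(κ x) ∂π := by
  conv_lhs => rw [← hπ]
  exact Measure.lintegral_bind_le f π _

variable [IsMarkovKernel κ] [IsProbabilityMeasure π] {f : S → ℝ≥0∞} {γ c : ℝ≥0∞}

theorem IsStationaryMeasure.lintegral_min_le_of_drift (hπ : IsStationaryMeasure κ π)
    (hf : Measurable f) (hdrift : ∀ᵐ x ∂π, ∫⁻ y, f y ∂(κ x) ≤ γ * f x + c) (t m : ℝ≥0∞) :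
    ∫⁻ x, min (t * f x) m ∂π ≤ ∫⁻ x, min (t * γ * f x) m ∂π + t * c := by
  have hstep : ∀ᵐ x ∂π, ∫⁻ y, min (t * f y) m ∂(κ x) ≤ min (t * γ * f x) m + t * c := by
    filter_upwards [hdrift] with x hx
    calc ∫⁻ y, min (t * f y) m ∂(κ x) ≤ min (∫⁻ y, t * f y ∂(κ x)) m :=
          lintegral_min_le_min_lintegral _ _ _
      _ ≤ min (t * γ * f x + t * c) m := by
          rw [lintegral_const_mul _ hf]
          gcongr
          calc t * ∫⁻ y, f y ∂(κ x) ≤ t * (γ * f x + c) := by gcongr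
            _ = t * γ * f x + t * c := by ring
      _ ≤ min (t * γ * f x + t * c) (m + t * c) := min_le_min_left _ le_self_add
      _ = min (t * γ * f x) m + t * c := min_add_add_right _ _ _
  calc ∫⁻ x, min (t * f x) m ∂π ≤ ∫⁻ x, ∫⁻ y, min (t * f y) m ∂(κ x) ∂π :=
        hπ.lintegral_le_lintegral_kernel _
    _ ≤ ∫⁻ x, (min (t * γ * f x) m + t * c) ∂π := lintegral_mono_ae hstep
    _ = ∫⁻ x, min (t * γ * f x) m ∂π + t * c := by
        rw [lintegral_add_right _ measurable_const, lintegral_const, measure_univ, mul_one]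

theorem IsStationaryMeasure.lintegral_le_of_drift (hπ : IsStationaryMeasure κ π)
    (hf : Measurable f) (hfin : ∀ᵐ x ∂π, f x ≠ ∞) (hγ : γ < 1)
    (hdrift : ∀ᵐ x ∂π, ∫⁻ y, f y ∂(κ x) ≤ γ * f x + c) :
    ∫⁻ x, f x ∂π ≤ c / (1 - γ) := by
  have htrunc : ∀ m : ℕ, ∫⁻ x, min (f x) m ∂π ≤ c / (1 - γ) := by
    intro m
    have key := ENNReal.le_tsum_of_le_add_of_tendsto_zero
      (a := fun n => ∫⁻ x, min (γ ^ n * f x) m ∂π) (b := fun n => γ ^ n * c)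
      (fun n => by simpa [pow_succ] using hπ.lintegral_min_le_of_drift hf hdrift (γ ^ n) m)
      (tendsto_lintegral_min_pow_mul hf hfin hγ (natCast_ne_top m))
    simpa [ENNReal.tsum_mul_right, ENNReal.tsum_geometric, ENNReal.div_eq_inv_mul] using key
  have hmono : Monotone fun (n : ℕ) x => min (f x) n :=
    fun i j hij x => min_le_min_left _ (Nat.cast_le.2 hij)
  calc ∫⁻ x, f x ∂π = ∫⁻ x, ⨆ n : ℕ, min (f x) n ∂π := by simp_rw [ENNReal.iSup_min_natCast]
    _ = ⨆ n : ℕ, ∫⁻ x, min (f x) n ∂π :=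
        lintegral_iSup (fun _ => hf.min measurable_const) hmono
    _ ≤ c / (1 - γ) := iSup_le htrunc

end Stationary

theorem IsGeomLyapunov.lintegral_le_mul_add {S : Type*} [MeasurableSpace S] {κ : Kernel S S}
    {Φ : S → ℝ≥0∞} {γ K φ₀ : ℝ≥0∞} (hgeom : IsGeomLyapunov κ Φ γ K)
    (hφ : ∀ x, ∫⁻ y, Φ y ∂(κ x) ≤ φ₀ * Φ x) (x : S) :
    ∫⁻ y, Φ y ∂(κ x) ≤ γ * Φ x + φ₀ * K := by
  rcases lt_or_ge K (Φ x) with hlarge | hsmall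
  · exact (hgeom x hlarge).trans le_self_add
  · exact (hφ x).trans ((mul_le_mul_right hsmall φ₀).trans le_add_self)

theorem stationary_lyapunov_bound_general {S : Type*} [MeasurableSpace S]
    (κ : Kernel S S) [IsMarkovKernel κ]
    (Φ : S → ℝ≥0∞) (hΦmeas : Measurable Φ) (hΦfin : ∀ x, Φ x ≠ ∞)
    (γ K φ₀ : ℝ≥0∞) (hγ1 : γ < 1)
    (hgeom : IsGeomLyapunov κ Φ γ K)
    (hφ : ∀ x, ∫⁻ y, Φ y ∂(κ x) ≤ φ₀ * Φ x)
    (π : Measure S) [IsProbabilityMeasure π]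
    (hπ : IsStationaryMeasure κ π) :
    ∫⁻ x, Φ x ∂π ≤ φ₀ * K / (1 - γ) :=
  hπ.lintegral_le_of_drift hΦmeas (ae_of_all _ hΦfin) hγ1
    (ae_of_all _ (hgeom.lintegral_le_mul_add hφ))

/-- Theorem 5: if `Φ` is a geometric Lyapunov function with drift size `γ ∈ (0,1)`
and exception parameter `K`, and `∫ Φ dκ(x,·) ≤ φ₀ Φ(x)` for all `x`, then any
stationary distribution `π` satisfies `∫ Φ dπ ≤ φ₀ K / (1 − γ)`. -/
theorem stationary_lyapunov_bound {S : Type*} [MeasurableSpace S]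
    (κ : Kernel S S) [IsMarkovKernel κ]
    (Φ : S → ℝ≥0∞) (hΦmeas : Measurable Φ) (hΦfin : ∀ x, Φ x ≠ ∞)
    (γ K φ₀ : ℝ≥0∞) (hγ0 : 0 < γ) (hγ1 : γ < 1) (hK : K ≠ ∞) (hφ₀ : φ₀ ≠ ∞)
    (hgeom : IsGeomLyapunov κ Φ γ K)
    (hφ : ∀ x, ∫⁻ y, Φ y ∂(κ x) ≤ φ₀ * Φ x)
    (π : Measure S) [IsProbabilityMeasure π]
    (hπ : IsStationaryMeasure κ π) :
    ∫⁻ x, Φ x ∂π ≤ φ₀ * K / (1 - γ) :=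
  stationary_lyapunov_bound_general κ Φ hΦmeas hΦfin γ K φ₀ hγ1 hgeom hφ π hπ

end
end

section
/- Let Φ : S → [0,∞) be measurable, suppose Φ is integrable with respect to κ(x, ·) for every x ∈ S and that x ↦ ∫ Φ(y) κ(x, dy) is measurable, suppose there is a constant c ≥ 0 such that Φ(x) − ∫ Φ(y) κ(x, dy) ≥ −c for all x ∈ S, and let π be a stationary probability measure for κ. Then ∫_S ( Φ(x) − ∫ Φ(y) κ(x, dy) ) dπ(x) ≤ 0, where the outer integral is well defined in (−∞, +∞] since the integrand is bounded below by −c. -/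
/-!
Work in `ℝ≥0∞` with `f = ENNReal.ofReal ∘ Φ`, `Pf x = ∫⁻ f dκ(x, ·)` and the drift
`f + c - Pf`. If `∫⁻ f dπ` is finite, stationarity gives `∫⁻ Pf dπ = ∫⁻ f dπ`, so the drift
integrates to exactly `c`. In general, the truncations `f ∧ n` inherit the bound
`P(f ∧ n) ≤ f ∧ n + c` (as `P(f ∧ n) ≤ n`) and have finite integral; their drifts converge
pointwise to the drift of `f` by monotone convergence, and Fatou's lemma bounds the integral
of the limit by `c`.
-/

open MeasureTheory ProbabilityTheory ENNReal
open Filter Topology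

noncomputable section

section Truncation

variable {α : Type*} [MeasurableSpace α] {μ : Measure α}

lemma lintegral_min_natCast_le_min_add [IsProbabilityMeasure μ] {f : α → ℝ≥0∞} {a c : ℝ≥0∞}
    (h : ∫⁻ y, f y ∂μ ≤ a + c) (n : ℕ) :
    ∫⁻ y, min (f y) n ∂μ ≤ min a n + c := by
  rw [← min_add_add_right]
  refine le_min ((lintegral_mono fun y => min_le_left _ _).trans h) ?_
  calc ∫⁻ y, min (f y) n ∂μ ≤ ∫⁻ _, (n : ℝ≥0∞) ∂μ := lintegral_mono fun y => min_le_right _ _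
    _ = n := by simp
    _ ≤ n + c := le_self_add

lemma lintegral_min_natCast_ne_top [IsFiniteMeasure μ] (f : α → ℝ≥0∞) (n : ℕ) :
    ∫⁻ x, min (f x) n ∂μ ≠ ∞ :=
  ((lintegral_mono fun _ => min_le_right _ _).trans_lt <| by
    rw [lintegral_const]; exact ENNReal.mul_lt_top (natCast_lt_top n) (measure_lt_top μ _)).ne

lemma tendsto_min_natCast (a : ℝ≥0∞) : Tendsto (fun n : ℕ => min a n) atTop (𝓝 a) := by
  simpa using tendsto_const_nhds.min ENNReal.tendsto_nat_nhds_top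

lemma tendsto_lintegral_min_natCast {f : α → ℝ≥0∞} (hf : AEMeasurable f μ) :
    Tendsto (fun n : ℕ => ∫⁻ x, min (f x) n ∂μ) atTop (𝓝 (∫⁻ x, f x ∂μ)) :=
  lintegral_tendsto_of_tendsto_of_monotone (fun _ => hf.min aemeasurable_const)
    (ae_of_all _ fun _ _ _ hmn => min_le_min_left _ (Nat.cast_le.2 hmn))
    (ae_of_all _ fun x => tendsto_min_natCast (f x))

end Truncation

lemma drift_le_liminf_drift_min_natCast {S : Type*} [MeasurableSpace S] (κ : Kernel S S)
    {f : S → ℝ≥0∞} (hf : Measurable f) (c : ℝ≥0∞) (x : S) :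
    f x + c - ∫⁻ y, f y ∂κ x ≤
      liminf (fun n : ℕ => min (f x) n + c - ∫⁻ y, min (f y) n ∂κ x) atTop := by
  by_cases hPf : ∫⁻ y, f y ∂κ x = ∞
  · simp [hPf] -- truncated subtraction: the left side is `0`
  · exact (ENNReal.Tendsto.sub ((tendsto_min_natCast _).add tendsto_const_nhds)
      (tendsto_lintegral_min_natCast hf.aemeasurable) (Or.inr hPf)).liminf_eq.ge

namespace IsStationaryMeasure

variable {S : Type*} [MeasurableSpace S] {κ : Kernel S S} {π : Measure S}

lemma lintegral_lintegral_kernel (hπ : IsStationaryMeasure κ π) {f : S → ℝ≥0∞}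
    (hf : Measurable f) : ∫⁻ x, ∫⁻ y, f y ∂κ x ∂π = ∫⁻ x, f x ∂π := by
  conv_rhs => rw [← hπ]
  exact (Measure.lintegral_bind κ.measurable.aemeasurable hf.aemeasurable).symm

lemma lintegral_drift_eq [IsProbabilityMeasure π] (hπ : IsStationaryMeasure κ π)
    {f : S → ℝ≥0∞} (hf : Measurable f) (hfπ : ∫⁻ x, f x ∂π ≠ ∞) {c : ℝ≥0∞}
    (hdrift : ∀ x, ∫⁻ y, f y ∂κ x ≤ f x + c) :
    ∫⁻ x, f x + c - ∫⁻ y, f y ∂κ x ∂π = c := by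
  have hPf := hπ.lintegral_lintegral_kernel hf
  rw [lintegral_sub hf.lintegral_kernel (hPf ▸ hfπ) (ae_of_all _ hdrift),
    lintegral_add_right _ measurable_const, hPf, lintegral_const, measure_univ, mul_one,
    ENNReal.add_sub_cancel_left hfπ]

theorem lintegral_drift_le [IsMarkovKernel κ] [IsProbabilityMeasure π]
    (hπ : IsStationaryMeasure κ π) {f : S → ℝ≥0∞} (hf : Measurable f) {c : ℝ≥0∞}
    (hdrift : ∀ x, ∫⁻ y, f y ∂κ x ≤ f x + c) :
    ∫⁻ x, f x + c - ∫⁻ y, f y ∂κ x ∂π ≤ c := by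
  have hf_min (n : ℕ) : Measurable fun x => min (f x) n := hf.min measurable_const
  calc ∫⁻ x, f x + c - ∫⁻ y, f y ∂κ x ∂π
      ≤ ∫⁻ x, liminf (fun n : ℕ => min (f x) n + c - ∫⁻ y, min (f y) n ∂κ x) atTop ∂π :=
        lintegral_mono (drift_le_liminf_drift_min_natCast κ hf c)
    _ ≤ liminf (fun n : ℕ => ∫⁻ x, min (f x) n + c - ∫⁻ y, min (f y) n ∂κ x ∂π) atTop :=
        lintegral_liminf_le fun n =>
          ((hf_min n).add measurable_const).sub (hf_min n).lintegral_kernel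
    _ = c := by
        simp only [hπ.lintegral_drift_eq (hf_min _) (lintegral_min_natCast_ne_top f _)
          fun x => lintegral_min_natCast_le_min_add (hdrift x) _, liminf_const]

end IsStationaryMeasure

/-- The integral `∫ (Φ - PΦ) dπ ∈ (-∞, ∞]` is encoded as `∫⁻ (Φ - PΦ + c)⁺ dπ - c`. -/
theorem stationary_drift_integral_nonpos_general {S : Type*} [MeasurableSpace S]
    (κ : Kernel S S) [IsMarkovKernel κ]
    (Φ : S → ℝ) (hΦmeas : Measurable Φ) (hΦ0 : ∀ x, 0 ≤ Φ x)
    (hint : ∀ x, Integrable Φ (κ x))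
    (c : ℝ) (hc : 0 ≤ c)
    (hlb : ∀ x, -c ≤ Φ x - ∫ y, Φ y ∂(κ x))
    (π : Measure S) [IsProbabilityMeasure π]
    (hπ : IsStationaryMeasure κ π) :
    ∫⁻ x, ENNReal.ofReal (Φ x - (∫ y, Φ y ∂(κ x)) + c) ∂π ≤ ENNReal.ofReal c := by
  have hPΦ x : ENNReal.ofReal (∫ y, Φ y ∂κ x) = ∫⁻ y, ENNReal.ofReal (Φ y) ∂κ x :=
    ofReal_integral_eq_lintegral_ofReal (hint x) (ae_of_all _ hΦ0)
  have hdrift x :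
      ∫⁻ y, ENNReal.ofReal (Φ y) ∂κ x ≤ ENNReal.ofReal (Φ x) + ENNReal.ofReal c := by
    rw [← hPΦ, ← ENNReal.ofReal_add (hΦ0 x) hc]
    exact ENNReal.ofReal_le_ofReal (by linarith [hlb x])
  have hintegrand x : ENNReal.ofReal (Φ x - (∫ y, Φ y ∂κ x) + c) =
      ENNReal.ofReal (Φ x) + ENNReal.ofReal c - ∫⁻ y, ENNReal.ofReal (Φ y) ∂κ x := by
    rw [← hPΦ, ← ENNReal.ofReal_add (hΦ0 x) hc, ← ENNReal.ofReal_sub _ (integral_nonneg hΦ0),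
      sub_add_eq_add_sub]
  simpa only [hintegrand] using hπ.lintegral_drift_le hΦmeas.ennreal_ofReal hdrift

/-- If the drift `x ↦ Φ(x) − ∫ Φ dκ(x,·)` is bounded below by `−c`, then its
integral against any stationary distribution `π` is at most `0`.  Since the
integrand is bounded below by `−c`, the integral is well defined in `(−∞, ∞]`;
the conclusion is stated equivalently as
`∫⁻ (Φ(x) − ∫ Φ dκ(x,·) + c)⁺ dπ ≤ c`. -/
theorem stationary_drift_integral_nonpos {S : Type*} [MeasurableSpace S]
    (κ : Kernel S S) [IsMarkovKernel κ]
    (Φ : S → ℝ) (hΦmeas : Measurable Φ) (hΦ0 : ∀ x, 0 ≤ Φ x)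
    (hint : ∀ x, Integrable Φ (κ x))
    (hmeas : Measurable fun x => ∫ y, Φ y ∂(κ x))
    (c : ℝ) (hc : 0 ≤ c)
    (hlb : ∀ x, -c ≤ Φ x - ∫ y, Φ y ∂(κ x))
    (π : Measure S) [IsProbabilityMeasure π]
    (hπ : IsStationaryMeasure κ π) :
    ∫⁻ x, ENNReal.ofReal (Φ x - (∫ y, Φ y ∂(κ x)) + c) ∂π ≤ ENNReal.ofReal c :=
  stationary_drift_integral_nonpos_general κ Φ hΦmeas hΦ0 hint c hc hlb π hπ

end
end

section
/- Suppose Φ satisfies the drift condition with parameters γ > 0 and K ≥ 0, let θ > 0, and let L₂ ≥ 0 be a constant such that ∫ (Φ(y) − Φ(x))² · exp(θ·(Φ(y) − Φ(x))⁺) κ(x, dy) ≤ L₂ for every x ∈ S, with θ·L₂ ≤ γ. Then for every x with Φ(x) > K, ∫ exp(θ·Φ(y)) κ(x, dy) ≤ (1 − γθ/2) · exp(θ·Φ(x)); that is, the function exp(θ·Φ) is a geometric Lyapunov function for κ with geometric drift size 1 − γθ/2 and exception parameter exp(θK). -/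
/-!
Taylor's formula with Lagrange remainder gives `exp a ≤ 1 + a + a²/2 · exp (max a 0)`. Applied
to `a = θ (Φ y − Φ x)` and integrated against `κ(x, ·)` it yields
`∫ exp (θ Φ) dκ(x, ·) ≤ exp (θ Φ x) · (1 + θ (∫ Φ dκ(x, ·) − Φ x) + θ²/2 · L₂)`.
Off the exceptional set the drift condition makes the linear term at most `−θγ`, and `θ L₂ ≤ γ`
makes the quadratic one at most `θγ/2`.
-/

open MeasureTheory ProbabilityTheory ENNReal

noncomputable section

/-- `Φ` satisfies the drift condition with parameters `γ > 0` and `K ≥ 0`: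
`Φ` is integrable with respect to `κ(x,·)` for every `x`, and
`∫ Φ dκ(x,·) − Φ(x) ≤ −γ` whenever `Φ(x) > K`. -/
def SatisfiesDrift {S : Type*} [MeasurableSpace S]
    (κ : Kernel S S) (Φ : S → ℝ) (γ K : ℝ) : Prop :=
  (∀ x, Integrable Φ (κ x)) ∧
    ∀ x, K < Φ x → (∫ y, Φ y ∂(κ x)) - Φ x ≤ -γ

namespace Real

theorem exp_le_one_add_add_sq_div_two {t : ℝ} (ht : t ≤ 0) : exp t ≤ 1 + t + t ^ 2 / 2 := by
  have hmono : Monotone fun s => exp s - (1 + s + s ^ 2 / 2) := by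
    refine monotone_of_hasDerivAt_nonneg (f' := fun s => exp s - (1 + s)) (fun s => ?_)
      fun s => sub_nonneg.2 (by linarith [add_one_le_exp s])
    refine ((hasDerivAt_exp s).fun_sub
      (((hasDerivAt_id s).const_add 1).fun_add ((hasDerivAt_pow 2 s).div_const 2))).congr_deriv ?_
    simp
  simpa using hmono ht

-- `exp a ≤ 1 + a + a²/2 · exp a` divided by `exp a`: in this form the derivative has a sign.
theorem one_le_one_add_mul_exp_neg_add_sq_div_two {a : ℝ} (ha : 0 ≤ a) :
    1 ≤ (1 + a) * exp (-a) + a ^ 2 / 2 := by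
  have hmono : Monotone fun s => (1 + s) * exp (-s) + s ^ 2 / 2 := by
    refine monotone_of_hasDerivAt_nonneg (f' := fun s => s * (1 - exp (-s))) (fun s => ?_)
      fun s => ?_
    · refine ((((hasDerivAt_id s).const_add 1).fun_mul (hasDerivAt_neg s).exp).fun_add
        ((hasDerivAt_pow 2 s).div_const 2)).congr_deriv ?_
      simp only [id]; ring
    · rcases le_total s 0 with hs | hs
      · exact mul_nonneg_of_nonpos_of_nonpos hs (by simpa using one_le_exp (neg_nonneg.2 hs))
      · exact mul_nonneg hs (by simpa using exp_le_one_iff.2 (neg_nonpos.2 hs))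
  simpa using hmono ha

theorem exp_le_one_add_add_sq_div_two_mul_exp_max (a : ℝ) :
    exp a ≤ 1 + a + a ^ 2 / 2 * exp (max a 0) := by
  rcases le_total a 0 with ha | ha
  · simpa [max_eq_right ha] using exp_le_one_add_add_sq_div_two ha
  · rw [max_eq_left ha]
    calc exp a = exp a * 1 := (mul_one _).symm
      _ ≤ exp a * ((1 + a) * exp (-a) + a ^ 2 / 2) := by
        gcongr
        exact one_le_one_add_mul_exp_neg_add_sq_div_two ha
      _ = (1 + a) * (exp a * exp (-a)) + a ^ 2 / 2 * exp a := by ring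
      _ = 1 + a + a ^ 2 / 2 * exp a := by rw [← exp_add, add_neg_cancel, exp_zero]; ring

end Real

namespace MeasureTheory

variable {S : Type*} [MeasurableSpace S] {μ : Measure S}

theorem integrable_and_integral_le_of_lintegral_ofReal_le {g : S → ℝ} {M : ℝ}
    (hg : AEStronglyMeasurable g μ) (hg0 : ∀ y, 0 ≤ g y) (hM : 0 ≤ M)
    (hgM : ∫⁻ y, ENNReal.ofReal (g y) ∂μ ≤ ENNReal.ofReal M) :
    Integrable g μ ∧ ∫ y, g y ∂μ ≤ M := by
  have hint : Integrable g μ :=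
    ⟨hg, (hasFiniteIntegral_iff_ofReal (.of_forall hg0)).2 (hgM.trans_lt ofReal_lt_top)⟩
  refine ⟨hint, (ENNReal.ofReal_le_ofReal_iff hM).1 ?_⟩
  rwa [ofReal_integral_eq_lintegral_ofReal hint (.of_forall hg0)]

theorem integral_exp_mul_le [IsProbabilityMeasure μ] {f : S → ℝ} (hf : Integrable f μ)
    {θ : ℝ} (hθ : 0 ≤ θ) (c : ℝ)
    (hg : Integrable (fun y => (f y - c) ^ 2 * Real.exp (θ * max (f y - c) 0)) μ) :
    Integrable (fun y => Real.exp (θ * f y)) μ ∧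
      ∫ y, Real.exp (θ * f y) ∂μ ≤ Real.exp (θ * c) * (1 + θ * ((∫ y, f y ∂μ) - c) +
        θ ^ 2 / 2 * ∫ y, (f y - c) ^ 2 * Real.exp (θ * max (f y - c) 0) ∂μ) := by
  set g := fun y => (f y - c) ^ 2 * Real.exp (θ * max (f y - c) 0)
  have hdev : Integrable (fun y => θ * (f y - c)) μ := (hf.sub (integrable_const c)).const_mul θ
  have hquad : Integrable (fun y => 1 + θ * (f y - c) + θ ^ 2 / 2 * g y) μ :=
    ((integrable_const 1).fun_add hdev).fun_add (hg.const_mul _)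
  have hpt : ∀ y,
      Real.exp (θ * f y) ≤ Real.exp (θ * c) * (1 + θ * (f y - c) + θ ^ 2 / 2 * g y) := by
    intro y
    have hmax : max (θ * (f y - c)) 0 = θ * max (f y - c) 0 := by
      rw [mul_max_of_nonneg _ _ hθ, mul_zero]
    calc Real.exp (θ * f y) = Real.exp (θ * c) * Real.exp (θ * (f y - c)) := by
          rw [← Real.exp_add]; congr 1; ring
      _ ≤ _ := by
        gcongr
        refine (Real.exp_le_one_add_add_sq_div_two_mul_exp_max (θ * (f y - c))).trans_eq ?_
        rw [hmax]
        ring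
  have hexp : Integrable (fun y => Real.exp (θ * f y)) μ := by
    refine (hquad.const_mul (Real.exp (θ * c))).mono'
      (Real.continuous_exp.comp_aestronglyMeasurable (hf.aestronglyMeasurable.const_mul θ))
      (.of_forall fun y => ?_)
    rw [Real.norm_of_nonneg (Real.exp_pos _).le]
    exact hpt y
  refine ⟨hexp, ?_⟩
  calc ∫ y, Real.exp (θ * f y) ∂μ
      ≤ ∫ y, Real.exp (θ * c) * (1 + θ * (f y - c) + θ ^ 2 / 2 * g y) ∂μ :=
        integral_mono hexp (hquad.const_mul _) hpt
    _ = _ := by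
        rw [integral_const_mul, integral_add ((integrable_const 1).fun_add hdev) (hg.const_mul _),
          integral_add (integrable_const 1) hdev, integral_const_mul, integral_const_mul,
          integral_sub hf (integrable_const c)]
        simp

end MeasureTheory

theorem exp_geometric_lyapunov_general {S : Type*} [MeasurableSpace S]
    (κ : Kernel S S) [IsMarkovKernel κ]
    (Φ : S → ℝ)
    (γ K : ℝ)
    (hdrift : SatisfiesDrift κ Φ γ K)
    (θ : ℝ) (hθ : 0 < θ)
    (L₂ : ℝ) (hL₂0 : 0 ≤ L₂)
    (hL₂ : ∀ x, ∫⁻ y, ENNReal.ofReal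
        ((Φ y - Φ x) ^ 2 * Real.exp (θ * max (Φ y - Φ x) 0)) ∂(κ x)
      ≤ ENNReal.ofReal L₂)
    (hθL₂ : θ * L₂ ≤ γ) :
    ∀ x, K < Φ x →
      ∫⁻ y, ENNReal.ofReal (Real.exp (θ * Φ y)) ∂(κ x)
        ≤ ENNReal.ofReal ((1 - γ * θ / 2) * Real.exp (θ * Φ x)) := by
  intro x hx
  obtain ⟨hΦint, hstep⟩ := hdrift
  have hmeas : AEStronglyMeasurable
      (fun y => (Φ y - Φ x) ^ 2 * Real.exp (θ * max (Φ y - Φ x) 0)) (κ x) := by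
    have := (hΦint x).aestronglyMeasurable
    fun_prop
  obtain ⟨hmom_int, hmom⟩ := integrable_and_integral_le_of_lintegral_ofReal_le hmeas
    (fun y => by positivity) hL₂0 (hL₂ x)
  obtain ⟨hexp_int, hexp⟩ := integral_exp_mul_le (hΦint x) hθ.le (Φ x) hmom_int
  rw [← ofReal_integral_eq_lintegral_ofReal hexp_int (.of_forall fun y => (Real.exp_pos _).le)]
  have hbracket : 1 + θ * ((∫ y, Φ y ∂(κ x)) - Φ x) +
      θ ^ 2 / 2 * ∫ y, (Φ y - Φ x) ^ 2 * Real.exp (θ * max (Φ y - Φ x) 0) ∂(κ x)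
      ≤ 1 - γ * θ / 2 := by
    nlinarith [mul_le_mul_of_nonneg_left (hstep x hx) hθ.le,
      mul_le_mul_of_nonneg_left hmom (by positivity : (0 : ℝ) ≤ θ ^ 2 / 2)]
  refine ENNReal.ofReal_le_ofReal (hexp.trans ?_)
  rw [mul_comm _ (Real.exp _)]
  exact mul_le_mul_of_nonneg_left hbracket (Real.exp_pos _).le

/-- Theorem 6, first part: under the drift condition and the second-moment
exponential bound `L₂` with `θ L₂ ≤ γ`, the function `exp(θΦ)` is a geometric
Lyapunov function with geometric drift size `1 − γθ/2` and exception parameter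
`exp(θK)`: for every `x` with `Φ(x) > K`,
`∫ exp(θ Φ) dκ(x,·) ≤ (1 − γθ/2) exp(θ Φ(x))`. -/
theorem exp_geometric_lyapunov {S : Type*} [MeasurableSpace S]
    (κ : Kernel S S) [IsMarkovKernel κ]
    (Φ : S → ℝ) (hΦmeas : Measurable Φ) (hΦ0 : ∀ x, 0 ≤ Φ x)
    (γ K : ℝ) (hγ : 0 < γ) (hK : 0 ≤ K)
    (hdrift : SatisfiesDrift κ Φ γ K)
    (θ : ℝ) (hθ : 0 < θ)
    (L₂ : ℝ) (hL₂0 : 0 ≤ L₂)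
    (hL₂ : ∀ x, ∫⁻ y, ENNReal.ofReal
        ((Φ y - Φ x) ^ 2 * Real.exp (θ * max (Φ y - Φ x) 0)) ∂(κ x)
      ≤ ENNReal.ofReal L₂)
    (hθL₂ : θ * L₂ ≤ γ) :
    ∀ x, K < Φ x →
      ∫⁻ y, ENNReal.ofReal (Real.exp (θ * Φ y)) ∂(κ x)
        ≤ ENNReal.ofReal ((1 - γ * θ / 2) * Real.exp (θ * Φ x)) :=
  exp_geometric_lyapunov_general κ Φ γ K hdrift θ hθ L₂ hL₂0 hL₂ hθL₂

end
end
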